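/- arXiv:2411.17996 — 4 statements merged into one kernel-verified Lean document; each statement's English description precedes it below -/
import Mathlib

section
/- Let r ≥ 2 and let G be an r-graph. Let 𝒱 = (V₀,…,V_{r−1}) be a tuple of pairwise disjoint subsets of V(G) and 𝒰 = (U₁,…,U_{r−1}) be a tuple of subsets of V(G) with |U_i| = m for all i ∈ [r−1], such that U₁∪⋯∪U_{r−1} is disjoint from V₀∪⋯∪V_{r−1}. Let m* ≤ m be a positive integer, and suppose (1) |V₀| ≤ min_{i∈[r−1]} |V_i| and (2) α*_𝒱(G) ≤ m*. Then G contains a matching M′ consisting of edges crossing 𝒱 that covers at least |V₀| − m* vertices of V₀. If moreover (3) e_G({v},U₁,…,U_{r−1}) ≥ (r−1)²·m^{r−2}·m* for every v ∈ V₀, then there is an additional matching M″ with |M″| ≤ m*, each edge of M″ crossing (V₀,U₁,…,U_{r−1}), such that M = M′ ∪ M″ is a matching covering all vertices of V₀. -/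
open Finset
open scoped Classical

namespace RD

variable {V : Type} [DecidableEq V] [Fintype V]
variable {ι : Type} [DecidableEq ι] [Fintype ι]

/-- `crossCount E X` is the number of tuples `(x₁,…,x_r) ∈ X₁×⋯×X_r` of pairwise
distinct vertices such that `{x₁,…,x_r}` is an edge: this is `e_G(X₁,…,X_r)`. -/
noncomputable def crossCount (E : Finset (Finset V)) {r : ℕ} (X : Fin r → Finset V) : ℕ :=
  ((Fintype.piFinset X).filter
    (fun x => Function.Injective x ∧ Finset.image x Finset.univ ∈ E)).card

/-- The `r`-partite hole number `α*(G)`: the largest `t` such that there are sets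
`X₁,…,X_r` of size `t` each with `e_G(X₁,…,X_r) = 0`. -/
noncomputable def holeNumber (E : Finset (Finset V)) (r : ℕ) : ℕ :=
  sSup {t | ∃ X : Fin r → Finset V, (∀ i, (X i).card = t) ∧ crossCount E X = 0}

/-- The hole number `α*_𝒱(G)` relative to a tuple `W` of host sets. -/
noncomputable def holeNumberWithin (E : Finset (Finset V)) {r : ℕ}
    (W : Fin r → Finset V) : ℕ :=
  sSup {t | ∃ X : Fin r → Finset V, (∀ i, X i ⊆ W i ∧ (X i).card = t) ∧ crossCount E X = 0}

/-- Hole number for the parts `P i`, `i ∈ e` (for pairwise disjoint parts):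
the largest `m` such that there are `X i ⊆ P i` of size `m` (for `i ∈ e`) such that
no edge of `G` has one vertex in each `X i`. -/
noncomputable def holeNumberOn (E : Finset (Finset V)) (e : Finset ι)
    (P : ι → Finset V) : ℕ :=
  sSup {m | ∃ X : ι → Finset V, (∀ i ∈ e, X i ⊆ P i ∧ (X i).card = m) ∧
    ∀ g ∈ E, ¬ (∀ i ∈ e, (g ∩ X i).Nonempty)}

/-- The degree of a vertex: the number of edges containing it. -/
noncomputable def deg (E : Finset (Finset V)) (v : V) : ℕ :=
  (E.filter (fun e => v ∈ e)).card

/-- The degree of a vertex set: the number of edges containing it. -/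
noncomputable def degOn (E : Finset (Finset V)) (S : Finset V) : ℕ :=
  (E.filter (fun e => S ⊆ e)).card

/-- The degree of `v` in the multipartite subgraph `G[𝒱_e]` spanned by the parts
`P i`, `i ∈ e` (for pairwise disjoint parts). -/
noncomputable def degIn (E : Finset (Finset V)) (e : Finset ι) (P : ι → Finset V)
    (v : V) : ℕ :=
  (E.filter (fun g => v ∈ g ∧ ∀ i ∈ e, (g ∩ P i).Nonempty)).card

/-- A matching: a collection of pairwise disjoint edges. -/
def IsMatching (M : Finset (Finset V)) : Prop :=
  ∀ e ∈ M, ∀ f ∈ M, e ≠ f → Disjoint e f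

/-- A set `e` crosses the tuple `X` if its elements can be ordered as `x₁,…,x_r`
with `x_i ∈ X i`. -/
def Crosses {r : ℕ} (X : Fin r → Finset V) (e : Finset V) : Prop :=
  ∃ x : Fin r → V, Function.Injective x ∧ Finset.image x Finset.univ = e ∧ ∀ i, x i ∈ X i

/-- The set of vertices covered by a collection of edges. -/
noncomputable def support (S : Finset (Finset V)) : Finset V := S.sup id

/-- The `i`-th edge (`i` starting from `0`) of the linear path with vertex sequence `f`. -/
noncomputable def pathEdge (r : ℕ) (f : ℕ → V) (i : ℕ) : Finset V :=
  (Finset.range r).image (fun j => f ((r - 1) * i + j))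

/-- `f` describes a linear path of length `ℓ` from `u` to `v`: the vertices
`f 0, …, f ((r-1)ℓ)` are distinct, the consecutive `r`-blocks are edges,
and the endpoints are `u` and `v`. -/
def IsLinearPathFrom (E : Finset (Finset V)) (r ℓ : ℕ) (f : ℕ → V) (u v : V) : Prop :=
  Set.InjOn f (Set.Iic ((r - 1) * ℓ)) ∧ (∀ i < ℓ, pathEdge r f i ∈ E) ∧
    f 0 = u ∧ f ((r - 1) * ℓ) = v

/-- The edge set of the linear path of length `ℓ` with vertex sequence `f`. -/
noncomputable def pathEdges (r ℓ : ℕ) (f : ℕ → V) : Finset (Finset V) :=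
  (Finset.range ℓ).image (pathEdge r f)

/-- A hypergraph is linear if two distinct edges share at most one vertex. -/
def IsLinear (E : Finset (Finset V)) : Prop :=
  ∀ e ∈ E, ∀ f ∈ E, e ≠ f → (e ∩ f).card ≤ 1

/-- A linear `r`-hypertree (on the whole vertex type `V`): an `r`-uniform linear
hypergraph in which every pair of distinct vertices is connected by a linear path,
uniquely so (as a set of edges). -/
def IsLinearHypertree (r : ℕ) (E : Finset (Finset V)) : Prop :=
  (∀ e ∈ E, e.card = r) ∧ IsLinear E ∧
    ∀ u v : V, u ≠ v →
      (∃ ℓ f, IsLinearPathFrom E r ℓ f u v) ∧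
      (∀ ℓ₁ f₁ ℓ₂ f₂, IsLinearPathFrom E r ℓ₁ f₁ u v →
        IsLinearPathFrom E r ℓ₂ f₂ u v → pathEdges r ℓ₁ f₁ = pathEdges r ℓ₂ f₂)

/-- A linear `r`-hyperforest: an `r`-uniform linear hypergraph in which every pair of
distinct vertices is connected by at most one linear path (as a set of edges);
equivalently, a vertex-disjoint union of linear `r`-hypertrees. -/
def IsLinearHyperforest (r : ℕ) (E : Finset (Finset V)) : Prop :=
  (∀ e ∈ E, e.card = r) ∧ IsLinear E ∧
    ∀ u v : V, u ≠ v →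
      ∀ ℓ₁ f₁ ℓ₂ f₂, IsLinearPathFrom E r ℓ₁ f₁ u v →
        IsLinearPathFrom E r ℓ₂ f₂ u v → pathEdges r ℓ₁ f₁ = pathEdges r ℓ₂ f₂

/-- A leaf-edge of an `r`-uniform hypertree: an edge containing at least `r-1`
vertices of degree one. -/
def IsLeafEdge (E : Finset (Finset V)) (r : ℕ) (e : Finset V) : Prop :=
  e ∈ E ∧ r - 1 ≤ (e.filter (fun v => deg E v = 1)).card

/-- The hypertree `T'` obtained by deleting all leaf-edges. -/
noncomputable def nonLeafEdges (E : Finset (Finset V)) (r : ℕ) : Finset (Finset V) :=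
  E.filter (fun e => ¬ IsLeafEdge E r e)

/-- A pendant star of `T`: a leaf-edge `e` of `T' = nonLeafEdges T`, together with all
leaf-edges of `T` incident to `e ∖ {v}`, where `v` is a vertex of `e` of degree at
least `2` in `T'` (an arbitrary vertex of `e` if no such vertex exists). -/
def IsPendantStar (E : Finset (Finset V)) (r : ℕ) (S : Finset (Finset V)) : Prop :=
  ∃ e, IsLeafEdge (nonLeafEdges E r) r e ∧ ∃ v ∈ e,
    ((∃ w ∈ e, 2 ≤ deg (nonLeafEdges E r) w) → 2 ≤ deg (nonLeafEdges E r) v) ∧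
    S = insert e (E.filter (fun g => IsLeafEdge E r g ∧ (g ∩ (e \ {v})).Nonempty))

/-- A bare path (of length `ℓ ≥ 2`) in the hypergraph with edge set `E`:
a linear path whose internal vertices lie in no edge outside the path. -/
def IsBarePath (E : Finset (Finset V)) (r ℓ : ℕ) (f : ℕ → V) : Prop :=
  2 ≤ ℓ ∧ IsLinearPathFrom E r ℓ f (f 0) (f ((r - 1) * ℓ)) ∧
    ∀ g ∈ E, g ∉ pathEdges r ℓ f → ∀ j, 0 < j → j < (r - 1) * ℓ → f j ∉ g

/-- A caterpillar of length `ℓ` in `T`: a bare path of `T' = nonLeafEdges T` of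
length `ℓ` together with all leaf-edges of `T` incident to its internal vertices. -/
def IsCaterpillar (E : Finset (Finset V)) (r ℓ : ℕ) (C : Finset (Finset V)) : Prop :=
  ∃ f : ℕ → V, IsBarePath (nonLeafEdges E r) r ℓ f ∧
    C = pathEdges r ℓ f ∪
      E.filter (fun g => IsLeafEdge E r g ∧ ∃ j, 0 < j ∧ j < (r - 1) * ℓ ∧ f j ∈ g)

/-- `G` admits the partition `(P, F)`: `P` is a partition of the vertex set and for
every `r`-set `e'` of indices that is not an edge of `F`, no edge of `G` has exactly
one vertex in each `P i`, `i ∈ e'`. -/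
def AdmitsPartition (E : Finset (Finset V)) (r : ℕ) (F : Finset (Finset ι))
    (P : ι → Finset V) : Prop :=
  (∀ i j : ι, i ≠ j → Disjoint (P i) (P j)) ∧ (∀ v : V, ∃ i, v ∈ P i) ∧
    ∀ g ∈ E, ∀ e' : Finset ι, e'.card = r → e' ∉ F →
      ¬ (∀ i ∈ e', (g ∩ P i).card = 1)

/-- A `P`-transversal copy of `F` in `G`, given by the embedding `ψ`. -/
def IsTransversalCopy (E : Finset (Finset V)) (F : Finset (Finset ι))
    (P : ι → Finset V) (ψ : ι → V) : Prop :=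
  Function.Injective ψ ∧ (∀ i, ψ i ∈ P i) ∧ ∀ e ∈ F, e.image ψ ∈ E

/-- `G[S]` has a transversal `F`-factor: a collection of vertex-disjoint
`P`-transversal copies of `F` whose vertex sets partition `S`. -/
def HasTransversalFactor (E : Finset (Finset V)) (F : Finset (Finset ι))
    (P : ι → Finset V) (S : Finset V) : Prop :=
  ∃ (k : ℕ) (ψ : Fin k → ι → V),
    (∀ a, IsTransversalCopy E F P (ψ a)) ∧
    (∀ a b, a ≠ b →
      Disjoint (Finset.image (ψ a) Finset.univ) (Finset.image (ψ b) Finset.univ)) ∧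
    Finset.univ.biUnion (fun a => Finset.image (ψ a) Finset.univ) = S

/-- A `P`-balanced set: one meeting all parts in the same number of vertices. -/
def IsBalanced (P : ι → Finset V) (S : Finset V) : Prop :=
  ∀ i j : ι, (S ∩ P i).card = (S ∩ P j).card

/-- A `P`-transversal set: one meeting every part in exactly one vertex. -/
def IsTransversalSet (P : ι → Finset V) (S : Finset V) : Prop :=
  ∀ i : ι, (S ∩ P i).card = 1

/-- `S'` is an `(F,k)`-absorber of the balanced set `S`. -/
def IsAbsorber (E : Finset (Finset V)) (F : Finset (Finset ι)) (P : ι → Finset V)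
    (k : ℕ) (S S' : Finset V) : Prop :=
  S' ⊆ Finset.univ \ S ∧ S'.card ≤ k * Fintype.card ι ∧
    HasTransversalFactor E F P S' ∧ HasTransversalFactor E F P (S ∪ S')

/-- `A` is a `(γ,F)`-absorbing set. -/
def IsAbsorbingSet (E : Finset (Finset V)) (F : Finset (Finset ι)) (P : ι → Finset V)
    (γ : ℝ) (A : Finset V) : Prop :=
  ∀ S' : Finset V, S' ⊆ Finset.univ \ A → IsBalanced P S' →
    (S'.card : ℝ) ≤ (Fintype.card ι : ℝ) * γ * (Fintype.card V : ℝ) →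
    HasTransversalFactor E F P (A ∪ S')

/-- `u` and `v` are `(F,m,k)`-reachable. -/
def Reachable (E : Finset (Finset V)) (F : Finset (Finset ι)) (P : ι → Finset V)
    (m : ℝ) (k : ℕ) (u v : V) : Prop :=
  ∀ W : Finset V, W ⊆ Finset.univ \ {u, v} → (∀ j : ι, ((W ∩ P j).card : ℝ) ≤ m) →
    ∃ S : Finset V, S ⊆ Finset.univ \ (W ∪ {u, v}) ∧
      S.card ≤ k * Fintype.card ι - 1 ∧
      HasTransversalFactor E F P (insert u S) ∧ HasTransversalFactor E F P (insert v S)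

/-- `v` is weakly `(F,m,k)`-reachable to `U`. -/
def WeaklyReachable (E : Finset (Finset V)) (F : Finset (Finset ι)) (P : ι → Finset V)
    (m : ℝ) (k : ℕ) (v : V) (U : Finset V) : Prop :=
  ∀ W : Finset V, W ⊆ U \ {v} → (∀ j : ι, ((W ∩ P j).card : ℝ) ≤ m) →
    ∃ u ∈ U \ W, ∃ S : Finset V, S ⊆ Finset.univ \ (W ∪ {u, v}) ∧
      S.card ≤ k * Fintype.card ι - 1 ∧
      HasTransversalFactor E F P (insert u S) ∧ HasTransversalFactor E F P (insert v S)

/-- A set `U ⊆ V_i` is `(F,m,k)`-closed. -/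
def IsClosed (E : Finset (Finset V)) (F : Finset (Finset ι)) (P : ι → Finset V)
    (m : ℝ) (k : ℕ) (U : Finset V) : Prop :=
  ∀ u ∈ U, ∀ v ∈ U, u ≠ v → Reachable E F P m k u v

/-- The tuple `X` is `(τ,d)`-regular. -/
def IsRegularTuple (E : Finset (Finset V)) {r : ℕ} (τ d : ℝ) (X : Fin r → Finset V) :
    Prop :=
  ∀ Y : Fin r → Finset V, (∀ i, Y i ⊆ X i) →
    (∀ i, τ * ((X i).card : ℝ) ≤ ((Y i).card : ℝ)) →
    |d - (crossCount E Y : ℝ) / ∏ i, ((Y i).card : ℝ)| ≤ τ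

/-- The tuple `X` is `(τ,d+)`-regular. -/
def IsRegularPlus (E : Finset (Finset V)) {r : ℕ} (τ d : ℝ) (X : Fin r → Finset V) :
    Prop :=
  ∃ d' : ℝ, d ≤ d' ∧ IsRegularTuple E τ d' X

/-- The `i`-th edge (for `i ∈ [t]`, `0`-indexed) of the linear cycle `C_t^{(r)}`
on the vertex set `Fin ((r-1)t)`. -/
noncomputable def cycEdge (r t i : ℕ) : Finset (Fin ((r - 1) * t)) :=
  Finset.univ.filter (fun v => ∃ j < r, (v : ℕ) = ((r - 1) * i + j) % ((r - 1) * t))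

/-- The edge set of the linear cycle `C_t^{(r)}` on the vertex set `Fin ((r-1)t)`. -/
noncomputable def cycF (r t : ℕ) : Finset (Finset (Fin ((r - 1) * t))) :=
  (Finset.range t).image (cycEdge r t)

end RD

/-! A crossing matching `M'` of maximum size leaves at most `α*_𝒱(G)` vertices of `V₀` uncovered:
otherwise, as `|V₀| ≤ |V_i|`, every part keeps at least as many uncovered vertices, and sets of
that size in all parts span a crossing edge that extends `M'`. The at most `m*` vertices left over
are matched greedily into `U₁, …, U_{r-1}`: the greedy edges chosen so far occupy at most
`(r-1)(m*-1)` vertices of the `U_i`, which lie on at most `(r-1)² m^{r-2} (m*-1)` of the edge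
tuples through the next vertex, fewer than its degree. -/

namespace RD

open Function

variable {V : Type} [DecidableEq V] {r : ℕ}

lemma mem_support {M : Finset (Finset V)} {v : V} : v ∈ support M ↔ ∃ e ∈ M, v ∈ e := by
  simp [support, sup_eq_biUnion]

lemma support_insert (e : Finset V) (M : Finset (Finset V)) :
    support (insert e M) = e ∪ support M :=
  sup_insert

lemma support_union (M N : Finset (Finset V)) : support (M ∪ N) = support M ∪ support N :=
  sup_union

lemma update_mk_zero_eq_ite {α : Type*} (U : Fin r → α) (hr : 0 < r) (a : α) :
    update U ⟨0, hr⟩ a = fun i : Fin r => if (i : ℕ) = 0 then a else U i :=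
  funext fun i => by simp [update_apply, Fin.ext_iff]

lemma IsMatching.insert {M : Finset (Finset V)} {e : Finset V} (hM : IsMatching M)
    (he : Disjoint e (support M)) : IsMatching (insert e M) := by
  have he' : ∀ f ∈ M, Disjoint e f := Finset.disjoint_sup_right.1 he
  intro f hf g hg hfg
  rcases mem_insert.1 hf with rfl | hfM
  · rcases mem_insert.1 hg with rfl | hgM
    · exact absurd rfl hfg
    · exact he' g hgM
  · rcases mem_insert.1 hg with rfl | hgM
    · exact (he' f hfM).symm
    · exact hM f hfM g hgM hfg

lemma IsMatching.union {M N : Finset (Finset V)} (hM : IsMatching M) (hN : IsMatching N)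
    (hMN : ∀ f ∈ N, Disjoint f (support M)) : IsMatching (M ∪ N) := by
  have hMN' : ∀ e ∈ M, ∀ f ∈ N, Disjoint e f := fun e he f hf =>
    (Finset.disjoint_sup_right.1 (hMN f hf) he).symm
  intro e he f hf hef
  rcases mem_union.1 he with he | he <;> rcases mem_union.1 hf with hf | hf
  · exact hM e he f hf hef
  · exact hMN' e he f hf
  · exact (hMN' f hf e he).symm
  · exact hN e he f hf hef

section Crosses

variable {X Y : Fin r → Finset V} {e : Finset V}

lemma Crosses.mono (he : Crosses X e) (hXY : X ≤ Y) : Crosses Y e :=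
  let ⟨x, hinj, hx, hxX⟩ := he
  ⟨x, hinj, hx, fun i => hXY i (hxX i)⟩

lemma Crosses.inter_nonempty (he : Crosses X e) (i : Fin r) : (e ∩ X i).Nonempty := by
  obtain ⟨x, -, rfl, hxX⟩ := he
  exact ⟨x i, mem_inter.2 ⟨mem_image_of_mem x (mem_univ i), hxX i⟩⟩

lemma Crosses.disjoint {s : Finset V} (he : Crosses X e) (hXs : ∀ i, Disjoint (X i) s) :
    Disjoint e s := by
  obtain ⟨x, -, rfl, hxX⟩ := he
  rw [disjoint_left]
  rintro _ hv
  obtain ⟨i, -, rfl⟩ := mem_image.1 hv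
  exact disjoint_left.1 (hXs i) (hxX i)

lemma Crosses.card_inter_eq_one (hX : ∀ i j, i ≠ j → Disjoint (X i) (X j)) (he : Crosses X e)
    (i : Fin r) : (e ∩ X i).card = 1 := by
  obtain ⟨x, hinj, rfl, hxX⟩ := he
  rw [card_eq_one]
  refine ⟨x i, eq_singleton_iff_unique_mem.2 ⟨mem_inter.2 ⟨mem_image_of_mem x (mem_univ i),
    hxX i⟩, fun v hv => ?_⟩⟩
  obtain ⟨hv, hvX⟩ := mem_inter.1 hv
  obtain ⟨j, -, rfl⟩ := mem_image.1 hv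
  by_contra hji
  exact disjoint_left.1 (hX j i (fun h => hji (h ▸ rfl))) (hxX j) hvX

lemma Crosses.card_sdiff_le (he : Crosses X e) (i : Fin r) : (e \ X i).card ≤ r - 1 := by
  obtain ⟨v, hv⟩ := he.inter_nonempty i
  obtain ⟨hve, hvX⟩ := mem_inter.1 hv
  obtain ⟨x, -, rfl, -⟩ := he
  calc (image x univ \ X i).card ≤ ((image x univ).erase v).card :=
        card_le_card fun w hw => mem_erase.2
          ⟨fun h => (mem_sdiff.1 hw).2 (h ▸ hvX), (mem_sdiff.1 hw).1⟩
    _ = (image x univ).card - 1 := card_erase_of_mem hve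
    _ ≤ r - 1 := Nat.sub_le_sub_right (card_image_le.trans_eq (by simp)) 1

lemma disjoint_support {M : Finset (Finset V)} {s : Finset V} (hMX : ∀ e ∈ M, Crosses X e)
    (hXs : ∀ i, Disjoint (X i) s) : Disjoint (support M) s :=
  Finset.disjoint_sup_left.2 fun e he => (hMX e he).disjoint hXs

end Crosses

lemma IsMatching.card_inter_support {M : Finset (Finset V)} (hM : IsMatching M)
    {X : Fin r → Finset V} (hX : ∀ i j, i ≠ j → Disjoint (X i) (X j))
    (hMX : ∀ e ∈ M, Crosses X e) (i : Fin r) : (X i ∩ support M).card = M.card := by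
  have hbiUnion : X i ∩ support M = M.biUnion (· ∩ X i) := by
    ext v; simp only [mem_inter, mem_support, mem_biUnion]; tauto
  rw [hbiUnion, card_biUnion fun e he f hf hef =>
    (hM e he f hf hef).mono inter_subset_left inter_subset_left]
  rw [sum_congr rfl fun e he => (hMX e he).card_inter_eq_one hX i, sum_const, smul_eq_mul,
    mul_one]

lemma card_support_sdiff_le {X : Fin r → Finset V} {M : Finset (Finset V)}
    (hMX : ∀ e ∈ M, Crosses X e) (i : Fin r) : (support M \ X i).card ≤ (r - 1) * M.card :=
  calc (support M \ X i).card ≤ (M.biUnion (· \ X i)).card :=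
        card_le_card fun v hv => by
          obtain ⟨hvM, hvX⟩ := mem_sdiff.1 hv
          obtain ⟨e, he, hve⟩ := mem_support.1 hvM
          exact mem_biUnion.2 ⟨e, he, mem_sdiff.2 ⟨hve, hvX⟩⟩
    _ ≤ ∑ e ∈ M, (e \ X i).card := card_biUnion_le
    _ ≤ ∑ _e ∈ M, (r - 1) := sum_le_sum fun e he => (hMX e he).card_sdiff_le i
    _ = (r - 1) * M.card := by rw [sum_const, smul_eq_mul, mul_comm]

lemma exists_crosses_of_crossCount_ne_zero {E : Finset (Finset V)} {X : Fin r → Finset V}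
    (h : crossCount E X ≠ 0) : ∃ e ∈ E, Crosses X e := by
  obtain ⟨x, hx⟩ := card_ne_zero.1 h
  obtain ⟨hxX, hinj, hxE⟩ := mem_filter.1 hx
  exact ⟨_, hxE, x, hinj, rfl, Fintype.mem_piFinset.1 hxX⟩

lemma le_holeNumberWithin (E : Finset (Finset V)) {X Y : Fin r → Finset V} (i₀ : Fin r)
    {t : ℕ} (hYX : ∀ i, Y i ⊆ X i) (hY : ∀ i, (Y i).card = t) (hE : crossCount E Y = 0) :
    t ≤ holeNumberWithin E X := by
  refine le_csSup ⟨(X i₀).card, ?_⟩ ⟨Y, fun i => ⟨hYX i, hY i⟩, hE⟩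
  rintro _ ⟨Z, hZ, -⟩
  exact (hZ i₀).2 ▸ card_le_card (hZ i₀).1

theorem exists_crossing_matching_card_sdiff_support_le (E : Finset (Finset V))
    (X : Fin r → Finset V) (hX : ∀ i j, i ≠ j → Disjoint (X i) (X j)) (i₀ : Fin r)
    (hsize : ∀ i, (X i₀).card ≤ (X i).card) :
    ∃ M ⊆ E, IsMatching M ∧ (∀ e ∈ M, Crosses X e) ∧
      (X i₀ \ support M).card ≤ holeNumberWithin E X := by
  obtain ⟨M, hMs, hmax⟩ := (E.powerset.filter fun M => IsMatching M ∧ ∀ e ∈ M, Crosses X e)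
    |>.exists_max_image card ⟨∅, mem_filter.2 ⟨empty_mem_powerset E, by simp [IsMatching]⟩⟩
  simp only [mem_filter, mem_powerset, and_imp] at hMs hmax
  obtain ⟨hME, hM, hMX⟩ := hMs
  refine ⟨M, hME, hM, hMX, ?_⟩
  by_contra! hlt
  have hfree : ∀ i, (X i₀ \ support M).card ≤ (X i \ support M).card := by
    intro i
    have hi := card_sdiff_add_card_inter (X i) (support M)
    have hi₀ := card_sdiff_add_card_inter (X i₀) (support M)
    rw [hM.card_inter_support hX hMX] at hi hi₀
    have := hsize i
    omega
  choose Y hYfree hYcard using fun i => exists_subset_card_eq (hfree i)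
  obtain ⟨e, heE, heY⟩ := exists_crosses_of_crossCount_ne_zero fun h =>
    (le_holeNumberWithin E i₀ (fun i => (hYfree i).trans sdiff_subset) hYcard h).not_gt hlt
  have he : Disjoint e (support M) :=
    heY.disjoint fun i => disjoint_of_subset_left (hYfree i) sdiff_disjoint
  have heM : e ∉ M := fun heM => by
    obtain ⟨v, hv⟩ := heY.inter_nonempty i₀
    exact disjoint_left.1 he (mem_inter.1 hv).1 (mem_support.2 ⟨e, heM, (mem_inter.1 hv).1⟩)
  have := hmax (insert e M) (insert_subset heE hME) (hM.insert he)
    (forall_mem_insert _ _ _ |>.2 ⟨heY.mono fun i => (hYfree i).trans sdiff_subset, hMX⟩)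
  rw [card_insert_of_notMem heM] at this
  omega

lemma card_filter_piFinset_apply_mem_le {ι α : Type*} [Fintype ι] [DecidableEq ι]
    [DecidableEq α] (Z : ι → Finset α) (i : ι) (W : Finset α) :
    ((Fintype.piFinset Z).filter fun x => x i ∈ W).card ≤
      W.card * ∏ j ∈ univ.erase i, (Z j).card :=
  calc ((Fintype.piFinset Z).filter fun x => x i ∈ W).card
      ≤ (W.biUnion fun w => (Fintype.piFinset Z).filter fun x => x i = w).card :=
        card_le_card fun x hx => by
          obtain ⟨hxZ, hxW⟩ := mem_filter.1 hx
          exact mem_biUnion.2 ⟨x i, hxW, mem_filter.2 ⟨hxZ, rfl⟩⟩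
    _ ≤ ∑ w ∈ W, ((Fintype.piFinset Z).filter fun x => x i = w).card := card_biUnion_le
    _ ≤ ∑ _w ∈ W, ∏ j ∈ univ.erase i, (Z j).card := sum_le_sum fun w _ => by
        rw [Fintype.card_filter_piFinset_eq (α := fun _ => α)]
        split_ifs <;> simp
    _ = W.card * ∏ j ∈ univ.erase i, (Z j).card := by rw [sum_const, smul_eq_mul]

lemma prod_card_update_singleton_le {α : Type*} {U : Fin r → Finset α} {i₀ : Fin r} {m : ℕ}
    (hU : ∀ j ≠ i₀, (U j).card ≤ m) {i : Fin r} (hi : i ≠ i₀) (a : α) :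
    ∏ j ∈ univ.erase i, (update U i₀ {a} j).card ≤ m ^ (r - 2) := by
  have hi₀ : i₀ ∈ univ.erase i := mem_erase.2 ⟨hi.symm, mem_univ i₀⟩
  rw [← mul_prod_erase _ _ hi₀, update_self, card_singleton, one_mul]
  calc ∏ j ∈ (univ.erase i).erase i₀, (update U i₀ {a} j).card
      ≤ m ^ ((univ.erase i).erase i₀).card := prod_le_pow_card _ _ _ fun j hj => by
        rw [update_of_ne (ne_of_mem_erase hj)]
        exact hU j (ne_of_mem_erase hj)
    _ = m ^ (r - 2) := by
      rw [card_erase_of_mem hi₀, card_erase_of_mem (mem_univ i), card_univ, Fintype.card_fin,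
        Nat.sub_sub]

section Update

variable {U : Fin r → Finset V} {i₀ : Fin r} {m : ℕ}

lemma card_filter_exists_apply_mem_le (hU : ∀ j ≠ i₀, (U j).card ≤ m) (a : V) (W : Finset V) :
    ((Fintype.piFinset (update U i₀ {a})).filter fun x => ∃ i ≠ i₀, x i ∈ W).card ≤
      (r - 1) * (W.card * m ^ (r - 2)) :=
  calc ((Fintype.piFinset (update U i₀ {a})).filter fun x => ∃ i ≠ i₀, x i ∈ W).card
      ≤ ((univ.erase i₀).biUnion fun i =>
          (Fintype.piFinset (update U i₀ {a})).filter fun x => x i ∈ W).card :=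
        card_le_card fun x hx => by
          obtain ⟨hxZ, i, hi, hxW⟩ := mem_filter.1 hx
          exact mem_biUnion.2 ⟨i, mem_erase.2 ⟨hi, mem_univ i⟩, mem_filter.2 ⟨hxZ, hxW⟩⟩
    _ ≤ ∑ i ∈ univ.erase i₀,
          ((Fintype.piFinset (update U i₀ {a})).filter fun x => x i ∈ W).card :=
        card_biUnion_le
    _ ≤ ∑ _i ∈ univ.erase i₀, W.card * m ^ (r - 2) := sum_le_sum fun i hi =>
        (card_filter_piFinset_apply_mem_le _ i W).trans
          (Nat.mul_le_mul_left _ (prod_card_update_singleton_le hU (ne_of_mem_erase hi) a))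
    _ = (r - 1) * (W.card * m ^ (r - 2)) := by
      rw [sum_const, smul_eq_mul, card_erase_of_mem (mem_univ i₀), card_univ, Fintype.card_fin]

lemma exists_crosses_update_sdiff {E : Finset (Finset V)} (hU : ∀ j ≠ i₀, (U j).card ≤ m)
    {a : V} {W : Finset V}
    (hW : (r - 1) * (W.card * m ^ (r - 2)) < crossCount E (update U i₀ {a})) :
    ∃ e ∈ E, Crosses (update (fun i => U i \ W) i₀ {a}) e := by
  obtain ⟨x, hx, hxW⟩ : ∃ x ∈ (Fintype.piFinset (update U i₀ {a})).filter
      (fun x => Injective x ∧ image x univ ∈ E), ¬ ∃ i ≠ i₀, x i ∈ W := by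
    by_contra! h
    exact hW.not_ge <|
      (card_le_card fun x hx => mem_filter.2 ⟨(mem_filter.1 hx).1, h x hx⟩).trans
        (card_filter_exists_apply_mem_le hU a W)
  obtain ⟨hxU, hinj, hxE⟩ := mem_filter.1 hx
  refine ⟨_, hxE, x, hinj, rfl, fun i => ?_⟩
  have hxi := Fintype.mem_piFinset.1 hxU i
  rcases eq_or_ne i i₀ with rfl | hi
  · simpa using hxi
  · rw [update_of_ne hi] at hxi ⊢
    exact mem_sdiff.2 ⟨hxi, fun h => hxW ⟨i, hi, h⟩⟩

lemma Crosses.disjoint_support_of_update {M : Finset (Finset V)} {S : Finset V} {a : V}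
    {e : Finset V} (he : Crosses (update (fun i => U i \ (support M \ S)) i₀ {a}) e)
    (hMX : ∀ f ∈ M, Crosses (update U i₀ S) f) (haS : a ∉ S)
    (hUS : ∀ i ≠ i₀, Disjoint (U i) (insert a S)) : Disjoint e (support M) := by
  have haM : Disjoint (support M) {a} := disjoint_support hMX fun i => by
    rcases eq_or_ne i i₀ with rfl | hi
    · simpa using haS
    · simpa [update_of_ne hi] using disjoint_left.1 (hUS i hi).symm (mem_insert_self a S)
  refine he.disjoint fun i => ?_
  rcases eq_or_ne i i₀ with rfl | hi
  · simpa using haM.symm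
  · rw [update_of_ne hi, disjoint_left]
    intro v hvU hvM
    obtain ⟨hvU, hvW⟩ := mem_sdiff.1 hvU
    have hvS : v ∈ S := by_contra fun hvS => hvW (mem_sdiff.2 ⟨hvM, hvS⟩)
    exact disjoint_left.1 (hUS i hi) hvU (mem_insert_of_mem hvS)

theorem exists_matching_covering_of_lt_crossCount (E : Finset (Finset V))
    (hU : ∀ j ≠ i₀, (U j).card ≤ m) {k : ℕ} (S : Finset V) (hUS : ∀ i ≠ i₀, Disjoint (U i) S)
    (hSk : S.card ≤ k)
    (hdeg : ∀ v ∈ S, (r - 1) ^ 2 * m ^ (r - 2) * (k - 1) < crossCount E (update U i₀ {v})) :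
    ∃ M ⊆ E, M.card ≤ S.card ∧ IsMatching M ∧ (∀ e ∈ M, Crosses (update U i₀ S) e) ∧
      S ⊆ support M := by
  induction S using Finset.induction_on with
  | empty => exact ⟨∅, empty_subset E, le_rfl, by simp [IsMatching], by simp, empty_subset _⟩
  | insert a S haS ih =>
    rw [card_insert_of_notMem haS] at hSk ⊢
    obtain ⟨M, hME, hMS, hM, hMX, hSM⟩ :=
      ih (fun i hi => (hUS i hi).mono_right (subset_insert a S)) (by omega)
        (fun v hv => hdeg v (mem_insert_of_mem hv))
    have hW : (support M \ S).card ≤ (r - 1) * (k - 1) := by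
      have := card_support_sdiff_le hMX i₀
      rw [update_self] at this
      exact this.trans (Nat.mul_le_mul_left _ (by omega))
    obtain ⟨e, heE, he⟩ := exists_crosses_update_sdiff hU (W := support M \ S) <|
      calc (r - 1) * ((support M \ S).card * m ^ (r - 2))
          ≤ (r - 1) * ((r - 1) * (k - 1) * m ^ (r - 2)) := by gcongr
        _ = (r - 1) ^ 2 * m ^ (r - 2) * (k - 1) := by ring
        _ < crossCount E (update U i₀ {a}) := hdeg a (mem_insert_self a S)
    have heM : Disjoint e (support M) := he.disjoint_support_of_update hMX haS hUS
    have hae : a ∈ e := by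
      obtain ⟨v, hv⟩ := he.inter_nonempty i₀
      rw [update_self, mem_inter, mem_singleton] at hv
      exact hv.2 ▸ hv.1
    refine ⟨insert e M, insert_subset heE hME, (card_insert_le e M).trans (by omega),
      hM.insert heM,
      forall_mem_insert _ _ _ |>.2 ⟨he.mono ?_, fun f hf => (hMX f hf).mono ?_⟩, ?_⟩
    · exact update_le_update_iff.2 ⟨singleton_subset_iff.2 (mem_insert_self a S),
        fun _ _ => sdiff_subset⟩
    · exact update_le_update_iff.2 ⟨subset_insert a S, fun _ _ => le_rfl⟩
    · rw [support_insert]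
      exact insert_subset (mem_union_left _ hae) (hSM.trans subset_union_right)

end Update

end RD

/-- the matching lemma (Lemma 3.1 / `lem: find matching`). -/
theorem stmt_5 (r : ℕ) (hr : 2 ≤ r) (V : Type) [DecidableEq V] [Fintype V]
    (E : Finset (Finset V))
    (X : Fin r → Finset V) (hXdisj : ∀ i j, i ≠ j → Disjoint (X i) (X j))
    (U : Fin r → Finset V) (m : ℕ) (hU : ∀ i : Fin r, (i : ℕ) ≠ 0 → (U i).card = m)
    (hUX : ∀ i : Fin r, (i : ℕ) ≠ 0 → ∀ j : Fin r, Disjoint (U i) (X j))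
    (mstar : ℕ) (hm1 : 1 ≤ mstar) (hmm : mstar ≤ m)
    (hsize : ∀ i : Fin r, (X ⟨0, by omega⟩).card ≤ (X i).card)
    (hhole : RD.holeNumberWithin E X ≤ mstar) :
    (∃ M' : Finset (Finset V), M' ⊆ E ∧ RD.IsMatching M' ∧
        (∀ e ∈ M', RD.Crosses X e) ∧
        (X ⟨0, by omega⟩).card - mstar ≤
          ((X ⟨0, by omega⟩).filter (fun v => ∃ e ∈ M', v ∈ e)).card) ∧
      ((∀ v ∈ X ⟨0, by omega⟩,
          (r - 1) ^ 2 * m ^ (r - 2) * mstar ≤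
            RD.crossCount E (fun i : Fin r => if (i : ℕ) = 0 then {v} else U i)) →
        ∃ M' M'' : Finset (Finset V), M' ⊆ E ∧ M'' ⊆ E ∧
          RD.IsMatching (M' ∪ M'') ∧
          (∀ e ∈ M', RD.Crosses X e) ∧
          (∀ e ∈ M'', RD.Crosses
            (fun i : Fin r => if (i : ℕ) = 0 then X ⟨0, by omega⟩ else U i) e) ∧
          M''.card ≤ mstar ∧
          ∀ v ∈ X ⟨0, by omega⟩, ∃ e ∈ M' ∪ M'', v ∈ e) := by
  set i₀ : Fin r := ⟨0, by omega⟩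
  have hne : ∀ {i : Fin r}, i ≠ i₀ → (i : ℕ) ≠ 0 := fun hi h => hi (Fin.ext h)
  obtain ⟨M', hM'E, hM', hM'X, hfree⟩ :=
    RD.exists_crossing_matching_card_sdiff_support_le E X hXdisj i₀ hsize
  have hcovered : (X i₀).filter (fun v => ∃ e ∈ M', v ∈ e) = X i₀ ∩ RD.support M' := by
    ext v; simp [RD.mem_support]
  have hsplit := card_sdiff_add_card_inter (X i₀) (RD.support M')
  refine ⟨⟨M', hM'E, hM', hM'X, by rw [hcovered]; omega⟩, fun hdeg => ?_⟩
  have hpos : 0 < (r - 1) ^ 2 * m ^ (r - 2) :=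
    Nat.mul_pos (pow_pos (by omega) 2) (pow_pos (by omega) _)
  obtain ⟨M'', hM''E, hM''card, hM'', hM''X, hcover⟩ :=
    RD.exists_matching_covering_of_lt_crossCount E (fun i hi => (hU i (hne hi)).le)
      (X i₀ \ RD.support M') (fun i hi => (hUX i (hne hi) i₀).mono_right sdiff_subset)
      (hfree.trans hhole) fun v hv => by
        rw [RD.update_mk_zero_eq_ite]
        exact (Nat.mul_lt_mul_left hpos).2 (by omega) |>.trans_le (hdeg v (mem_sdiff.1 hv).1)
  have hM''M' : ∀ f ∈ M'', Disjoint f (RD.support M') := fun f hf =>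
    (hM''X f hf).disjoint fun i => by
      rcases eq_or_ne i i₀ with rfl | hi
      · simpa using sdiff_disjoint
      · rw [Function.update_of_ne hi]
        exact (RD.disjoint_support hM'X fun j => (hUX i (hne hi) j).symm).symm
  refine ⟨M', M'', hM'E, hM''E, hM'.union hM'' hM''M', hM'X, fun f hf => ?_,
    hM''card.trans (hfree.trans hhole), fun v hv => RD.mem_support.1 ?_⟩
  · rw [← RD.update_mk_zero_eq_ite U (by omega)]
    exact (hM''X f hf).mono (update_le_update_iff.2 ⟨sdiff_subset, fun _ _ => le_rfl⟩)
  · rw [RD.support_union]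
    exact sdiff_le_iff.1 hcover hv
end

section
/- Let r ≥ 2, t ≥ 1, and let G be an r-graph. Let 𝒱 = (V₁,…,V_{(r−1)t+1}) be a tuple of pairwise disjoint subsets of V(G), and for each i ∈ [t] let 𝒱_i denote the r-tuple (V_{(r−1)(i−1)+1},…,V_{(r−1)i+1}). Suppose that |V_j| > ((r−1)t+1)·max_{i∈[t]} α*_{𝒱_i}(G) for every j ∈ [(r−1)t+1]. Then G contains a linear path of length t with vertices v₁,…,v_{(r−1)t+1} satisfying v_j ∈ V_j for every j; in particular this path connects a vertex in V₁ to a vertex in V_{(r−1)t+1}. -/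
open Finset
open scoped Classical

/-!
Fix `M` bounding every block hole number `α*_{𝒱_i}(G)` and call a vertex of `V_{(r-1)i+1}`
reachable if some edge sequence through `V₁, …, V_{(r-1)i+1}` ends at it. More than `M`
vertices of `V_{(r-1)i+1}` are reachable: otherwise the reachable set of the previous step,
the middle parts of the block `𝒱_i` and the unreachable part of `V_{(r-1)i+1}` would all have
more than `M` elements, so some edge would cross them and make an unreachable vertex reachable.
Disjointness of the parts makes the vertices of such an edge sequence distinct.
-/

namespace RD

section HoleNumber

variable {V : Type} [DecidableEq V] (E : Finset (Finset V)) {r : ℕ}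

theorem crossCount_pos_iff (X : Fin r → Finset V) :
    0 < crossCount E X ↔
      ∃ x : Fin r → V, Function.Injective x ∧ image x univ ∈ E ∧ ∀ a, x a ∈ X a := by
  simp only [crossCount, card_pos, filter_nonempty_iff, Fintype.mem_piFinset]
  exact ⟨fun ⟨x, hX, hx⟩ => ⟨x, hx.1, hx.2, hX⟩, fun ⟨x, hinj, hE, hX⟩ => ⟨x, hX, hinj, hE⟩⟩

theorem crossCount_mono {X Y : Fin r → Finset V} (h : ∀ a, X a ⊆ Y a) :
    crossCount E X ≤ crossCount E Y :=
  card_le_card (filter_subset_filter _ (Fintype.piFinset_subset X Y h))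

theorem le_holeNumberWithin_s6 [NeZero r] {W X : Fin r → Finset V} {m : ℕ}
    (hX : ∀ a, X a ⊆ W a ∧ (X a).card = m) (h0 : crossCount E X = 0) :
    m ≤ holeNumberWithin E W := by
  refine le_csSup ⟨(W 0).card, ?_⟩ ⟨X, hX, h0⟩
  rintro _ ⟨Y, hY, -⟩
  exact (hY 0).2 ▸ card_le_card (hY 0).1

theorem exists_crossing_of_holeNumberWithin_lt [NeZero r] {W X : Fin r → Finset V}
    (hXW : ∀ a, X a ⊆ W a) (hX : ∀ a, holeNumberWithin E W < (X a).card) :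
    ∃ x : Fin r → V, Function.Injective x ∧ image x univ ∈ E ∧ ∀ a, x a ∈ X a := by
  rw [← crossCount_pos_iff, Nat.pos_iff_ne_zero]
  intro h0
  choose Y hYX hY using fun a => exists_subset_card_eq (hX a)
  have hY0 : crossCount E Y = 0 := Nat.eq_zero_of_le_zero (h0 ▸ crossCount_mono E hYX)
  have := le_holeNumberWithin_s6 E (fun a => ⟨(hYX a).trans (hXW a), hY a⟩) hY0
  omega

end HoleNumber

section Walks

variable {V : Type} [DecidableEq V] (E : Finset (Finset V)) (s : ℕ) (W : ℕ → Finset V)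

/-- Like a linear path of length `i` with `f j ∈ W j`, except that vertices may repeat. -/
def IsWalkAlong (i : ℕ) (f : ℕ → V) : Prop :=
  (∀ j ≤ s * i, f j ∈ W j) ∧ ∀ k < i, pathEdge (s + 1) f k ∈ E

noncomputable def walkEnds (i : ℕ) : Finset V :=
  (W (s * i)).filter fun v => ∃ f, IsWalkAlong E s W i f ∧ f (s * i) = v

theorem pathEdge_succ (f : ℕ → V) (k : ℕ) :
    pathEdge (s + 1) f k = (range (s + 1)).image fun j => f (s * k + j) := by
  simp only [pathEdge, Nat.add_sub_cancel]

variable {E s W}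

theorem IsWalkAlong.injOn {i : ℕ} {f : ℕ → V} (hf : IsWalkAlong E s W i f)
    (hdisj : ∀ j ≤ s * i, ∀ j' ≤ s * i, j ≠ j' → Disjoint (W j) (W j')) :
    Set.InjOn f (Set.Iic (s * i)) := by
  intro j hj j' hj' hff
  by_contra hne
  exact disjoint_left.1 (hdisj j hj j' hj' hne) (hf.1 j hj) (hff ▸ hf.1 j' hj')

theorem IsWalkAlong.extend {i : ℕ} {f : ℕ → V} (hf : IsWalkAlong E s W i f)
    {x : Fin (s + 1) → V} (hxE : image x univ ∈ E) (hxW : ∀ a : Fin (s + 1), x a ∈ W (s * i + a))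
    (hx0 : x 0 = f (s * i)) :
    ∃ g, IsWalkAlong E s W (i + 1) g ∧ g (s * (i + 1)) = x (Fin.last s) := by
  set g : ℕ → V := fun j => if j ≤ s * i then f j else x ⟨min (j - s * i) s, by omega⟩
  have hg : ∀ a : Fin (s + 1), g (s * i + a) = x a := by
    intro a
    rcases Nat.eq_zero_or_pos (a : ℕ) with ha | ha
    · simp [g, hx0, show a = 0 from Fin.ext ha]
    · simp only [g, if_neg (show ¬ s * i + a ≤ s * i by omega)]
      congr 1
      ext
      simp only [Nat.add_sub_cancel_left]
      omega
  have hsucc : s * (i + 1) = s * i + s := by ring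
  refine ⟨g, ⟨fun j hj => ?_, fun k hk => ?_⟩, by rw [hsucc]; exact hg (Fin.last s)⟩
  · by_cases hji : j ≤ s * i
    · simpa [g, hji] using hf.1 j hji
    · obtain ⟨a, rfl⟩ : ∃ a : Fin (s + 1), s * i + a = j := ⟨⟨j - s * i, by omega⟩, by simp; omega⟩
      exact hg a ▸ hxW a
  · rcases Nat.lt_succ_iff_lt_or_eq.1 hk with hki | rfl
    · have hle : s * (k + 1) ≤ s * i := Nat.mul_le_mul_left _ hki
      convert hf.2 k hki using 1
      rw [pathEdge_succ, pathEdge_succ]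
      refine image_congr fun j hj => ?_
      simp only [coe_range, Set.mem_Iio] at hj
      simp only [g, if_pos (show s * k + j ≤ s * i by nlinarith)]
    · convert hxE using 1
      ext y
      simp only [pathEdge_succ, mem_image, mem_range, mem_univ, true_and]
      constructor
      · rintro ⟨j, hj, rfl⟩
        exact ⟨⟨j, hj⟩, (hg ⟨j, hj⟩).symm⟩
      · rintro ⟨a, rfl⟩
        exact ⟨a, a.isLt, hg a⟩

theorem walkEnds_zero : walkEnds E s W 0 = W 0 := by
  refine filter_true_of_mem fun v hv => ⟨fun _ => v, ⟨fun j hj => ?_, by simp⟩, rfl⟩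
  simp_all [Nat.le_zero.1 hj]

theorem walkEnds_subset (i : ℕ) : walkEnds E s W i ⊆ W (s * i) := filter_subset _ _

theorem card_sdiff_walkEnds_succ_le {i M : ℕ} (hs : 1 ≤ s)
    (hα : holeNumberWithin E (fun a : Fin (s + 1) => W (s * i + a)) ≤ M)
    (hU : M < (walkEnds E s W i).card) (hmid : ∀ a < s, M < (W (s * i + a)).card) :
    (W (s * (i + 1)) \ walkEnds E s W (i + 1)).card ≤ M := by
  set B := W (s * (i + 1)) \ walkEnds E s W (i + 1)
  by_contra! hB
  have hsucc : s * (i + 1) = s * i + s := by ring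
  let X : Fin (s + 1) → Finset V := fun a =>
    if a = 0 then walkEnds E s W i else if a = Fin.last s then B else W (s * i + a)
  have hXW : ∀ a : Fin (s + 1), X a ⊆ W (s * i + a) := by
    intro a
    by_cases h0 : a = 0
    · simpa [X, h0] using walkEnds_subset i
    by_cases hl : a = Fin.last s
    · subst hl
      simp only [X, if_neg h0, if_true, Fin.val_last, ← hsucc]
      exact sdiff_subset
    · simp [X, h0, hl]
  have hXcard : ∀ a, M < (X a).card := by
    intro a
    by_cases h0 : a = 0
    · simpa [X, h0] using hU
    by_cases hl : a = Fin.last s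
    · subst hl
      simpa only [X, if_neg h0, if_true] using hB
    · simpa [X, h0, hl] using hmid a (Fin.val_lt_last hl)
  obtain ⟨x, hinj, hxE, hxX⟩ :=
    exists_crossing_of_holeNumberWithin_lt E hXW fun a => hα.trans_lt (hXcard a)
  have hx0 : x 0 ∈ walkEnds E s W i := by simpa [X] using hxX 0
  have hxB : x (Fin.last s) ∈ B := by simpa [X, show s ≠ 0 by omega] using hxX (Fin.last s)
  obtain ⟨f, hf, hfx⟩ := (mem_filter.1 hx0).2
  obtain ⟨g, hg, hgx⟩ := hf.extend hxE (fun a => hXW a (hxX a)) hfx.symm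
  exact (mem_sdiff.1 hxB).2 (mem_filter.2 ⟨(mem_sdiff.1 hxB).1, g, hg, hgx⟩)

theorem lt_card_walkEnds {t M : ℕ} (hs : 1 ≤ s)
    (hα : ∀ i < t, holeNumberWithin E (fun a : Fin (s + 1) => W (s * i + a)) ≤ M)
    (hW : ∀ j ≤ s * t, 2 * M < (W j).card) {i : ℕ} (hi : i ≤ t) :
    M < (walkEnds E s W i).card := by
  induction i with
  | zero => rw [walkEnds_zero]; have := hW 0 (Nat.zero_le _); omega
  | succ i ih =>
    have hmid : ∀ a < s, M < (W (s * i + a)).card := fun a ha => by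
      have := hW (s * i + a) (by nlinarith)
      omega
    have hB := card_sdiff_walkEnds_succ_le hs (hα i hi) (ih (by omega)) hmid
    rw [card_sdiff_of_subset (walkEnds_subset _)] at hB
    have := hW (s * (i + 1)) (Nat.mul_le_mul_left _ hi)
    omega

theorem exists_linearPath_of_two_mul_lt_card {t M : ℕ} (hs : 1 ≤ s)
    (hdisj : ∀ j ≤ s * t, ∀ j' ≤ s * t, j ≠ j' → Disjoint (W j) (W j'))
    (hα : ∀ i < t, holeNumberWithin E (fun a : Fin (s + 1) => W (s * i + a)) ≤ M)
    (hW : ∀ j ≤ s * t, 2 * M < (W j).card) :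
    ∃ f : ℕ → V, IsLinearPathFrom E (s + 1) t f (f 0) (f (s * t)) ∧ ∀ j ≤ s * t, f j ∈ W j := by
  obtain ⟨v, hv⟩ := card_pos.1 (pos_of_gt (lt_card_walkEnds hs hα hW le_rfl))
  obtain ⟨f, hf, -⟩ := (mem_filter.1 hv).2
  refine ⟨f, ⟨?_, hf.2, rfl, ?_⟩, hf.1⟩
  · simpa using hf.injOn hdisj
  · simp

end Walks

end RD

theorem stmt_6_general (r t : ℕ) (hr : 2 ≤ r) (ht : 1 ≤ t) (V : Type) [DecidableEq V]
    (E : Finset (Finset V))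
    (W : ℕ → Finset V)
    (hdisj : ∀ j ≤ (r - 1) * t, ∀ j' ≤ (r - 1) * t, j ≠ j' → Disjoint (W j) (W j'))
    (hsize : ∀ j ≤ (r - 1) * t, ∀ i < t,
      ((r - 1) * t + 1) *
          RD.holeNumberWithin E (fun a : Fin r => W ((r - 1) * i + (a : ℕ))) <
        (W j).card) :
    ∃ f : ℕ → V, RD.IsLinearPathFrom E r t f (f 0) (f ((r - 1) * t)) ∧
      ∀ j ≤ (r - 1) * t, f j ∈ W j := by
  obtain ⟨s, rfl⟩ : ∃ s, r = s + 1 := ⟨r - 1, by omega⟩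
  simp only [Nat.add_sub_cancel] at hdisj hsize ⊢
  set α : ℕ → ℕ := fun i => RD.holeNumberWithin E (fun a : Fin (s + 1) => W (s * i + a))
  obtain ⟨i₀, hi₀, hM⟩ := exists_mem_eq_sup (range t) (nonempty_range_iff.2 (by omega)) α
  refine RD.exists_linearPath_of_two_mul_lt_card (M := (range t).sup α) (by omega) hdisj
    (fun i hi => le_sup (f := α) (mem_range.2 hi)) fun j hj => ?_
  have hbig := hsize j hj i₀ (mem_range.1 hi₀)
  have hst : 2 ≤ s * t + 1 := by nlinarith
  rw [hM]
  calc 2 * α i₀ ≤ (s * t + 1) * α i₀ := Nat.mul_le_mul_right _ hst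
    _ < (W j).card := hbig

/-- the path lemma (Lemma 3.2 / `lem: find path`). -/
theorem stmt_6 (r t : ℕ) (hr : 2 ≤ r) (ht : 1 ≤ t) (V : Type) [DecidableEq V] [Fintype V]
    (E : Finset (Finset V)) (hE : ∀ e ∈ E, e.card = r)
    (W : ℕ → Finset V)
    (hdisj : ∀ j ≤ (r - 1) * t, ∀ j' ≤ (r - 1) * t, j ≠ j' → Disjoint (W j) (W j'))
    (hsize : ∀ j ≤ (r - 1) * t, ∀ i < t,
      ((r - 1) * t + 1) *
          RD.holeNumberWithin E (fun a : Fin r => W ((r - 1) * i + (a : ℕ))) <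
        (W j).card) :
    ∃ f : ℕ → V, RD.IsLinearPathFrom E r t f (f 0) (f ((r - 1) * t)) ∧
      ∀ j ≤ (r - 1) * t, f j ∈ W j :=
  stmt_6_general r t hr ht V E W hdisj hsize
end

section
/- Let t ≥ 1 and n ≥ 1 with n^{r−|U|−1} ≥ t. Let G be an r-partite r-graph with r-partition 𝒱 = (V₁,…,V_r), where |V_j| ≤ n for all j ∈ [r]. Fix i ∈ [r], let U ⊆ V(G) be a set with U ∩ V_i = ∅, and let W = { w ∈ V_i : d_G(U ∪ {w}) ≥ t }. Then |W| ≥ (d_G(U) − (t−1)·n) / (n^{r−|U|−1} − t + 1). -/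
open Finset
open scoped Classical

/-! Every edge through `U` meets `V_i` in exactly one vertex, so `d(U) = ∑_{w ∈ V_i} d(U ∪ {w})`.
An edge through `S = U ∪ {w}` is determined by its traces on the parts, and its trace on a part
met by `S` is forced; since `S` meets at least `|S|` parts, `d(S) ≤ n^(r - |U| - 1)`. In the sum,
the vertices with `d(U ∪ {w}) < t` contribute at most `(t - 1) n` in total, and every other
vertex at most `n^(r - |U| - 1) = (n^(r - |U| - 1) - t + 1) + (t - 1)`. -/

namespace RD

variable {V : Type} [DecidableEq V] {r : ℕ}

theorem degOn_eq_sum_degOn_insert (E : Finset (Finset V)) (U A : Finset V)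
    (hA : ∀ e ∈ E, U ⊆ e → (e ∩ A).card = 1) :
    degOn E U = ∑ w ∈ A, degOn E (insert w U) := by
  simp only [degOn, card_filter]
  rw [sum_comm]
  refine sum_congr rfl fun e he => ?_
  by_cases hU : U ⊆ e
  · simp only [insert_subset_iff, hU, and_true, if_true]
    rw [← card_filter, filter_mem_eq_inter, inter_comm, hA e he hU]
  · have hw : ∀ w, ¬ insert w U ⊆ e := fun w h => hU ((subset_insert w U).trans h)
    simp [hU, hw]

section Partite

variable {E : Finset (Finset V)} {P : Fin r → Finset V}

theorem card_le_card_filter_inter_nonempty (hcover : ∀ v : V, ∃ j, v ∈ P j)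
    (hpart : ∀ e ∈ E, ∀ j, (e ∩ P j).card = 1) {S e : Finset V} (he : e ∈ E) (hS : S ⊆ e) :
    S.card ≤ (univ.filter fun j => (S ∩ P j).Nonempty).card := by
  choose part hpartMem using hcover
  refine card_le_card_of_injOn part (fun s hs => ?_) (fun s hs s' hs' hss' => ?_)
  · exact mem_filter.2 ⟨mem_univ _, s, mem_inter.2 ⟨hs, hpartMem s⟩⟩
  · have h := hpart e he (part s)
    exact card_le_one.1 h.le s (mem_inter.2 ⟨hS hs, hpartMem s⟩)
      s' (mem_inter.2 ⟨hS hs', hss' ▸ hpartMem s'⟩)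

theorem degOn_le_prod (hcover : ∀ v : V, ∃ j, v ∈ P j)
    (hpart : ∀ e ∈ E, ∀ j, (e ∩ P j).card = 1) (S : Finset V) :
    degOn E S ≤ ∏ j, if (S ∩ P j).Nonempty then 1 else (P j).card := by
  set Q : Fin r → Finset (Finset V) := fun j =>
    if (S ∩ P j).Nonempty then {S ∩ P j} else (P j).powersetCard 1
  calc degOn E S ≤ (Fintype.piFinset Q).card := by
        refine card_le_card_of_injOn (fun e j => e ∩ P j) (fun e he => ?_) ?_
        · obtain ⟨heE, hSe⟩ := mem_filter.1 he
          refine Fintype.mem_piFinset.2 fun j => ?_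
          by_cases hSj : (S ∩ P j).Nonempty
          · simp only [Q, if_pos hSj, mem_singleton]
            refine (eq_of_subset_of_card_le (inter_subset_inter_right hSe) ?_).symm
            rw [hpart e heE j]
            exact hSj.card_pos
          · simp only [Q, if_neg hSj]
            exact mem_powersetCard.2 ⟨inter_subset_right, hpart e heE j⟩
        · intro e _ e' _ hee'
          have hcup : ∀ f : Finset V, f = univ.biUnion fun j => f ∩ P j := fun f => by
            ext v
            obtain ⟨j, hj⟩ := hcover v
            simp only [mem_biUnion, mem_univ, true_and, mem_inter]
            exact ⟨fun hv => ⟨j, hv, hj⟩, fun ⟨_, hv, _⟩ => hv⟩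
          rw [hcup e, hcup e']
          exact congrArg _ hee'
    _ = ∏ j, if (S ∩ P j).Nonempty then 1 else (P j).card := by
        rw [Fintype.card_piFinset]
        refine prod_congr rfl fun j _ => ?_
        by_cases hSj : (S ∩ P j).Nonempty <;> simp [Q, hSj]

theorem degOn_le_pow {n : ℕ} (hn : 1 ≤ n) (hcover : ∀ v : V, ∃ j, v ∈ P j)
    (hpart : ∀ e ∈ E, ∀ j, (e ∩ P j).card = 1) (hsizes : ∀ j, (P j).card ≤ n)
    (S : Finset V) : degOn E S ≤ n ^ (r - S.card) := by
  rcases (E.filter fun e => S ⊆ e).eq_empty_or_nonempty with hempty | ⟨e, he⟩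
  · simp [degOn, hempty]
  · obtain ⟨heE, hSe⟩ := mem_filter.1 he
    set T := univ.filter fun j => (S ∩ P j).Nonempty
    calc degOn E S ≤ ∏ j, if (S ∩ P j).Nonempty then 1 else (P j).card :=
          degOn_le_prod hcover hpart S
      _ ≤ ∏ j, if (S ∩ P j).Nonempty then 1 else n :=
          prod_le_prod' fun j _ => by split_ifs <;> simp [hsizes j]
      _ = n ^ (r - T.card) := by
          rw [prod_ite, prod_const_one, one_mul, prod_const, filter_not, card_sdiff,
            card_univ, Fintype.card_fin, inter_univ]
      _ ≤ n ^ (r - S.card) :=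
          Nat.pow_le_pow_right hn
            (Nat.sub_le_sub_left (card_le_card_filter_inter_nonempty hcover hpart heE hSe) r)

end Partite

theorem sum_sub_div_le_card_filter {α : Type*} (A : Finset α) (f : α → ℕ) {t M n : ℕ}
    (ht : 1 ≤ t) (htM : t ≤ M) (hA : A.card ≤ n) (hf : ∀ w ∈ A, f w ≤ M) :
    ((∑ w ∈ A, (f w : ℝ)) - ((t : ℝ) - 1) * n) / ((M : ℝ) - t + 1) ≤
      ((A.filter fun w => t ≤ f w).card : ℝ) := by
  have htM' : (t : ℝ) ≤ M := by exact_mod_cast htM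
  have hpoint : ∀ w ∈ A,
      (f w : ℝ) ≤ (if t ≤ f w then (M : ℝ) - t + 1 else 0) + ((t : ℝ) - 1) := by
    intro w hw
    split_ifs with h
    · have : (f w : ℝ) ≤ M := by exact_mod_cast hf w hw
      linarith
    · have : f w + 1 ≤ t := by omega
      have : (f w : ℝ) + 1 ≤ t := by exact_mod_cast this
      linarith
  have hsum : ∑ w ∈ A, (f w : ℝ) ≤
      (A.filter fun w => t ≤ f w).card * ((M : ℝ) - t + 1) + A.card * ((t : ℝ) - 1) := by
    calc ∑ w ∈ A, (f w : ℝ)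
        ≤ ∑ w ∈ A, ((if t ≤ f w then (M : ℝ) - t + 1 else 0) + ((t : ℝ) - 1)) :=
          sum_le_sum hpoint
      _ = _ := by rw [sum_add_distrib, ← sum_filter, sum_const, sum_const, nsmul_eq_mul,
            nsmul_eq_mul]
  have hA' : (A.card : ℝ) ≤ n := by exact_mod_cast hA
  have ht' : (1 : ℝ) ≤ t := by exact_mod_cast ht
  rw [div_le_iff₀ (by linarith)]
  nlinarith

end RD

theorem stmt_7_general (r t n : ℕ) (ht : 1 ≤ t) (hn : 1 ≤ n)
    (V : Type) [DecidableEq V]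
    (E : Finset (Finset V))
    (P : Fin r → Finset V)
    (hcover : ∀ v : V, ∃ i, v ∈ P i)
    (hpart : ∀ e ∈ E, ∀ j : Fin r, (e ∩ P j).card = 1)
    (hsizes : ∀ j : Fin r, (P j).card ≤ n)
    (i : Fin r) (U : Finset V) (hUi : U ∩ P i = ∅)
    (hpow : t ≤ n ^ (r - U.card - 1)) :
    ((RD.degOn E U : ℝ) - ((t : ℝ) - 1) * n) /
        ((n : ℝ) ^ (r - U.card - 1) - (t : ℝ) + 1) ≤
      (((P i).filter (fun w => t ≤ RD.degOn E (insert w U))).card : ℝ) := by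
  have hdeg : ∀ w ∈ P i, RD.degOn E (insert w U) ≤ n ^ (r - U.card - 1) := fun w hw => by
    have hwU : w ∉ U := fun h => (eq_empty_iff_forall_notMem.1 hUi) w (mem_inter.2 ⟨h, hw⟩)
    simpa [card_insert_of_notMem hwU, Nat.sub_sub] using
      RD.degOn_le_pow hn hcover hpart hsizes (insert w U)
  rw [RD.degOn_eq_sum_degOn_insert E U (P i) fun e he _ => hpart e he i, Nat.cast_sum]
  exact_mod_cast RD.sum_sub_div_le_card_filter (P i) _ ht hpow (hsizes i) hdeg

/-- finding a set of large-degree vertices (Lemma 3.3 / `lem: find a set`). -/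
theorem stmt_7 (r t n : ℕ) (hr : 2 ≤ r) (ht : 1 ≤ t) (hn : 1 ≤ n)
    (V : Type) [DecidableEq V] [Fintype V]
    (E : Finset (Finset V)) (hE : ∀ e ∈ E, e.card = r)
    (P : Fin r → Finset V) (hdisj : ∀ i j, i ≠ j → Disjoint (P i) (P j))
    (hcover : ∀ v : V, ∃ i, v ∈ P i)
    (hpart : ∀ e ∈ E, ∀ j : Fin r, (e ∩ P j).card = 1)
    (hsizes : ∀ j : Fin r, (P j).card ≤ n)
    (i : Fin r) (U : Finset V) (hUi : U ∩ P i = ∅)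
    (hpow : t ≤ n ^ (r - U.card - 1)) :
    ((RD.degOn E U : ℝ) - ((t : ℝ) - 1) * n) /
        ((n : ℝ) ^ (r - U.card - 1) - (t : ℝ) + 1) ≤
      (((P i).filter (fun w => t ≤ RD.degOn E (insert w U))).card : ℝ) :=
  stmt_7_general r t n ht hn V E P hcover hpart hsizes i U hUi hpow
end

section
/- Let r ≥ 2, and let m, k, t be positive integers with m > 10kt. Let F be an r-graph on the vertex set [t] and let G be an r-graph admitting a partition (𝒱,F) with 𝒱 = (V₁,…,V_t). Fix i ∈ [t], let U₁ ⊆ V_i be an (F,m,k)-closed set of size at least m + 10kt, and let U₂ ⊆ V_i be a set disjoint from U₁. Suppose that for every W ⊆ V(G) with |W ∩ V_j| ≤ m − kt for all j ∈ [t] and every v ∈ U₂, there exist two vertex-disjoint 𝒱-transversal copies F₁, F₂ of F in G − W such that (1) V(F₁) ∩ V_i ⊆ U₁ and V(F₂) ∩ V_i = {v}, and (2) for every j ∈ [t]∖{i}, the vertex of F₁ in V_j and the vertex of F₂ in V_j are (F,m,k)-reachable. Then U₁ ∪ U₂ is (F, m−10kt, 6kt)-closed. -/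
open Finset
open scoped Classical

/-!
Call `S` a switcher for `u, v` if `S ∪ {u}` and `S ∪ {v}` both have transversal `F`-factors, so
that `u, v` are reachable iff small switchers avoiding every admissible `W` exist. Switchers for
`u, w` and for `w, v` that avoid each other glue, through `w`, into a switcher for `u, v`. If two
disjoint transversal copies `ψ₁, ψ₂` come with pairwise disjoint switchers `S j` for
`ψ₁ j, ψ₂ j` (`j ≠ i`), then `⋃_{j ≠ i} ({ψ₁ j, ψ₂ j} ∪ S j)` is a switcher for `ψ₁ i, ψ₂ i`.
A switcher of size `< K t` meets every part in at most `K` vertices, so switchers can be chosen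
one after another, each avoiding the previous ones, at a controlled cost in `m`.

For `u ∈ U₁` and `v ∈ U₂`, the hypothesis applied to `W ∪ {u}` gives copies linking some
`w ∈ U₁` to `v`, and closedness of `U₁` links `u` to `w`. Two vertices of `U₂` are linked
through a vertex of `U₁ ∖ W`, which exists because `|U₁| > |W ∩ V_i|`.
-/

set_option linter.unusedSectionVars false

open Function

namespace RD

theorem card_union_inter_le {α : Type*} [DecidableEq α] (X Y Z : Finset α) :
    ((X ∪ Y) ∩ Z).card ≤ (X ∩ Z).card + (Y ∩ Z).card := by
  rw [union_inter_distrib_right]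
  exact card_union_le _ _

theorem card_insert_inter_le {α : Type*} [DecidableEq α] (x : α) (X Z : Finset α) :
    (insert x X ∩ Z).card ≤ (X ∩ Z).card + 1 :=
  (card_le_card fun y => by simp only [mem_inter, mem_insert]; tauto).trans (card_insert_le _ _)

variable {V : Type} [DecidableEq V] [Fintype V] {ι : Type} [DecidableEq ι] [Fintype ι]
  {E : Finset (Finset V)} {F : Finset (Finset ι)} {P : ι → Finset V}

theorem hasTransversalFactor_empty : HasTransversalFactor E F P ∅ :=
  ⟨0, Fin.elim0, fun a => a.elim0, fun a => a.elim0, by simp⟩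

theorem IsTransversalCopy.hasTransversalFactor {ψ : ι → V} (h : IsTransversalCopy E F P ψ) :
    HasTransversalFactor E F P (univ.image ψ) :=
  ⟨1, fun _ => ψ, fun _ => h, fun a b hab => absurd (Subsingleton.elim a b) hab, by simp⟩

theorem hasTransversalFactor_of_family {A : Type*} [Fintype A] (ψ : A → ι → V)
    (hc : ∀ a, IsTransversalCopy E F P (ψ a))
    (hd : ∀ a b, a ≠ b → Disjoint (univ.image (ψ a)) (univ.image (ψ b))) :
    HasTransversalFactor E F P (univ.biUnion fun a => univ.image (ψ a)) := by
  let e := (Fintype.equivFin A).symm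
  refine ⟨Fintype.card A, fun a => ψ (e a), fun a => hc (e a),
    fun a b hab => hd (e a) (e b) (e.injective.ne hab), ?_⟩
  ext x
  simp only [mem_biUnion, mem_univ, true_and]
  exact e.exists_congr_left.trans (by simp)

theorem HasTransversalFactor.union {S₁ S₂ : Finset V} (h₁ : HasTransversalFactor E F P S₁)
    (h₂ : HasTransversalFactor E F P S₂) (hS : Disjoint S₁ S₂) :
    HasTransversalFactor E F P (S₁ ∪ S₂) := by
  obtain ⟨n₁, ψ₁, hc₁, hd₁, rfl⟩ := h₁
  obtain ⟨n₂, ψ₂, hc₂, hd₂, rfl⟩ := h₂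
  have hsub₁ := fun a => subset_biUnion_of_mem (fun a => univ.image (ψ₁ a)) (mem_univ a)
  have hsub₂ := fun a => subset_biUnion_of_mem (fun a => univ.image (ψ₂ a)) (mem_univ a)
  convert hasTransversalFactor_of_family (Sum.elim ψ₁ ψ₂) (Sum.rec hc₁ hc₂) ?_ using 1
  · ext x
    simp
  · rintro (a | a) (b | b) hab
    · exact hd₁ a b (by simpa using hab)
    · exact hS.mono (hsub₁ a) (hsub₂ b)
    · exact (hS.mono (hsub₁ b) (hsub₂ a)).symm
    · exact hd₂ a b (by simpa using hab)

theorem hasTransversalFactor_biUnion {κ : Type*} (J : Finset κ) {T : κ → Finset V}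
    (hT : ∀ j ∈ J, HasTransversalFactor E F P (T j)) (hJ : (J : Set κ).PairwiseDisjoint T) :
    HasTransversalFactor E F P (J.biUnion T) := by
  induction J using Finset.induction_on with
  | empty => simpa using hasTransversalFactor_empty
  | insert j J hj ih =>
    rw [coe_insert, Set.pairwiseDisjoint_insert_of_notMem (by simpa using hj)] at hJ
    rw [biUnion_insert]
    refine (hT j (mem_insert_self j J)).union (ih (fun l hl => hT l (mem_insert_of_mem hl)) hJ.1)
      ((disjoint_biUnion_right _ _ _).2 fun l hl => hJ.2 l hl)

theorem IsTransversalCopy.eq_of_mem (hP : Pairwise (Disjoint on P)) {ψ : ι → V}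
    (h : IsTransversalCopy E F P ψ) {p q : ι} (hq : ψ q ∈ P p) : q = p :=
  by_contra fun hne => disjoint_left.1 (hP hne) (h.2.1 q) hq

theorem IsTransversalCopy.card_image_inter_le_one (hP : Pairwise (Disjoint on P))
    {ψ : ι → V} (h : IsTransversalCopy E F P ψ) (p : ι) : (univ.image ψ ∩ P p).card ≤ 1 := by
  refine card_le_one.2 fun x hx y hy => ?_
  simp only [mem_inter, mem_image, mem_univ, true_and] at hx hy
  obtain ⟨⟨q, rfl⟩, hq⟩ := hx
  obtain ⟨⟨q', rfl⟩, hq'⟩ := hy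
  rw [h.eq_of_mem hP hq, h.eq_of_mem hP hq']

theorem HasTransversalFactor.card_inter_mul_card (hP : Pairwise (Disjoint on P))
    {T : Finset V} (h : HasTransversalFactor E F P T) (p : ι) :
    (T ∩ P p).card * Fintype.card ι = T.card := by
  obtain ⟨n, ψ, hc, hd, rfl⟩ := h
  have hpart : ∀ a, univ.image (ψ a) ∩ P p = {ψ a p} := by
    intro a
    ext x
    simp only [mem_inter, mem_image, mem_univ, true_and, mem_singleton]
    constructor
    · rintro ⟨⟨q, rfl⟩, hq⟩
      rw [(hc a).eq_of_mem hP hq]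
    · rintro rfl
      exact ⟨⟨p, rfl⟩, (hc a).2.1 p⟩
  rw [biUnion_inter, card_biUnion fun a _ b _ hab => (hd a b hab).mono inter_subset_left
    inter_subset_left, card_biUnion fun a _ b _ hab => hd a b hab]
  simp [hpart, card_image_of_injective _ (hc _).1]

def IsSwitcher (E : Finset (Finset V)) (F : Finset (Finset ι)) (P : ι → Finset V)
    (S : Finset V) (u v : V) : Prop :=
  u ∉ S ∧ v ∉ S ∧ HasTransversalFactor E F P (insert u S) ∧
    HasTransversalFactor E F P (insert v S)

theorem IsSwitcher.symm {S : Finset V} {u v : V} (h : IsSwitcher E F P S u v) :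
    IsSwitcher E F P S v u :=
  ⟨h.2.1, h.1, h.2.2.2, h.2.2.1⟩

theorem IsSwitcher.trans {S₁ S₂ : Finset V} {u w v : V} (h₁ : IsSwitcher E F P S₁ u w)
    (h₂ : IsSwitcher E F P S₂ w v) (hS : Disjoint S₁ S₂) (hu : u ∉ S₂) (hv : v ∉ S₁)
    (huw : u ≠ w) (hwv : w ≠ v) : IsSwitcher E F P (insert w (S₁ ∪ S₂)) u v := by
  obtain ⟨hu₁, hw₁, hfu, hfw₁⟩ := h₁
  obtain ⟨hw₂, hv₂, hfw₂, hfv⟩ := h₂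
  refine ⟨by simp [huw, hu₁, hu], by simp [hwv.symm, hv, hv₂], ?_, ?_⟩
  · rw [← union_insert, ← insert_union]
    exact hfu.union hfw₂ (by simp [hS, hu, huw.symm, hw₁])
  · rw [insert_comm, ← union_insert, ← insert_union]
    exact hfw₁.union hfv (by simp [hS, hv, hwv.symm, hw₂])

theorem IsSwitcher.card_inter_le (hP : Pairwise (Disjoint on P)) {S : Finset V}
    {u v : V} (h : IsSwitcher E F P S u v) {K : ℕ} (hS : S.card + 1 ≤ K * Fintype.card ι)
    (p : ι) : (S ∩ P p).card ≤ K := by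
  have hfac := h.2.2.1.card_inter_mul_card hP p
  rw [card_insert_of_notMem h.1] at hfac
  calc (S ∩ P p).card ≤ (insert u S ∩ P p).card :=
        card_le_card (inter_subset_inter (subset_insert _ _) le_rfl)
    _ ≤ K := Nat.le_of_mul_le_mul_right (hfac ▸ hS) (Fintype.card_pos_iff.2 ⟨p⟩)

theorem Reachable.symm {m : ℝ} {k : ℕ} {u v : V} (h : Reachable E F P m k u v) :
    Reachable E F P m k v u := by
  intro W hW hWm
  rw [pair_comm] at hW
  obtain ⟨S, hS, hcard, hu, hv⟩ := h W hW hWm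
  exact ⟨S, pair_comm u v ▸ hS, hcard, hv, hu⟩

theorem Reachable.mono {m m' : ℝ} {k k' : ℕ} {u v : V} (h : Reachable E F P m k u v)
    (hm : m' ≤ m) (hk : k ≤ k') : Reachable E F P m' k' u v := by
  intro W hW hWm
  obtain ⟨S, hS, hcard, hu, hv⟩ := h W hW fun p => (hWm p).trans hm
  exact ⟨S, hS, hcard.trans (Nat.sub_le_sub_right (Nat.mul_le_mul_right _ hk) 1), hu, hv⟩

theorem Reachable.exists_isSwitcher {m : ℝ} {k : ℕ} {u v : V} (h : Reachable E F P m k u v)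
    (hk : 1 ≤ k * Fintype.card ι) {W : Finset V} (hW : ∀ p, ((W ∩ P p).card : ℝ) ≤ m) :
    ∃ S, Disjoint S W ∧ S.card + 1 ≤ k * Fintype.card ι ∧ IsSwitcher E F P S u v := by
  obtain ⟨S, hS, hcard, hu, hv⟩ := h (W \ {u, v}) (by simp [subset_iff])
    fun p => le_trans (by gcongr; exact sdiff_subset) (hW p)
  have hS' : ∀ x ∈ S, x ∉ W ∧ x ≠ u ∧ x ≠ v := fun x hx => by
    have := hS hx
    simp only [mem_sdiff, mem_univ, mem_union, mem_insert, mem_singleton] at this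
    tauto
  exact ⟨S, disjoint_left.2 fun x hx => (hS' x hx).1, by omega,
    fun hmem => (hS' u hmem).2.1 rfl, fun hmem => (hS' v hmem).2.2 rfl, hu, hv⟩

theorem reachable_of_forall_exists_isSwitcher {m : ℝ} {k : ℕ} {u v : V}
    (h : ∀ W : Finset V, u ∉ W → v ∉ W → (∀ p, ((W ∩ P p).card : ℝ) ≤ m) →
      ∃ S, Disjoint S W ∧ S.card + 1 ≤ k * Fintype.card ι ∧ IsSwitcher E F P S u v) :
    Reachable E F P m k u v := by
  intro W hW hWm
  obtain ⟨S, hSW, hcard, hu, hv, hfu, hfv⟩ :=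
    h W (fun h => by simpa using hW h) (fun h => by simpa using hW h) hWm
  refine ⟨S, fun x hx => ?_, by omega, hfu, hfv⟩
  simp only [mem_sdiff, mem_univ, mem_union, mem_insert, mem_singleton, true_and]
  rintro (hxW | rfl | rfl)
  exacts [disjoint_left.1 hSW hx hxW, hu hx, hv hx]

theorem Reachable.exists_isSwitcher_trans {m : ℝ} {k : ℕ} {u w v : V} {S₂ W : Finset V}
    (h : Reachable E F P m k u w) (hk : 1 ≤ k * Fintype.card ι)
    (h₂ : IsSwitcher E F P S₂ w v) (hS₂W : Disjoint S₂ W) (hu : u ∉ S₂) (hw : w ∉ W)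
    (huw : u ≠ w) (hwv : w ≠ v)
    (hW : ∀ p, ((W ∩ P p).card : ℝ) + (S₂ ∩ P p).card + 1 ≤ m) :
    ∃ S, Disjoint S W ∧ S.card ≤ k * Fintype.card ι + S₂.card ∧ IsSwitcher E F P S u v := by
  obtain ⟨S₁, hS₁W, hS₁card, h₁⟩ := h.exists_isSwitcher hk (W := insert v (W ∪ S₂)) fun p => by
    have hins := card_insert_inter_le v (W ∪ S₂) (P p)
    have hunion := card_union_inter_le W S₂ (P p)
    have : ((insert v (W ∪ S₂) ∩ P p).card : ℝ) ≤ (W ∩ P p).card + (S₂ ∩ P p).card + 1 := by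
      exact_mod_cast hins.trans (by omega)
    linarith [hW p]
  simp only [disjoint_insert_right, disjoint_union_right] at hS₁W
  refine ⟨insert w (S₁ ∪ S₂), ?_, ?_, h₁.trans h₂ hS₁W.2.2 hu hS₁W.1 huw hwv⟩
  · simp [hw, hS₁W.2.1, hS₂W]
  · exact (card_insert_le _ _).trans (by have := card_union_le S₁ S₂; omega)

theorem exists_pairwiseDisjoint_isSwitchers (hP : Pairwise (Disjoint on P))
    {m : ℝ} {k : ℕ} (hk : 1 ≤ k * Fintype.card ι) {κ : Type*} (J : Finset κ) {a b : κ → V}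
    (hab : ∀ j ∈ J, Reachable E F P m k (a j) (b j)) {W : Finset V}
    (hW : ∀ p, ((W ∩ P p).card : ℝ) + k * J.card ≤ m) :
    ∃ S : κ → Finset V, (∀ j ∈ J, Disjoint (S j) W ∧ (S j).card + 1 ≤ k * Fintype.card ι ∧
      IsSwitcher E F P (S j) (a j) (b j)) ∧ (J : Set κ).PairwiseDisjoint S := by
  induction J using Finset.induction_on generalizing W with
  | empty => exact ⟨fun _ => ∅, by simp, by simp⟩
  | insert j₀ J hj₀ ih =>
    simp only [card_insert_of_notMem hj₀, Nat.cast_add, Nat.cast_one] at hW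
    obtain ⟨S₀, hS₀W, hS₀card, hS₀⟩ :=
      (hab j₀ (mem_insert_self _ _)).exists_isSwitcher hk (W := W) fun p => by
        nlinarith [hW p, k.cast_nonneg (α := ℝ), J.card.cast_nonneg (α := ℝ)]
    obtain ⟨S, hS, hSJ⟩ := ih (fun j hj => hab j (mem_insert_of_mem hj)) (W := W ∪ S₀)
      fun p => by
        have : (((W ∪ S₀) ∩ P p).card : ℝ) ≤ (W ∩ P p).card + k := by
          exact_mod_cast (card_union_inter_le W S₀ (P p)).trans
            (Nat.add_le_add_left (hS₀.card_inter_le hP hS₀card p) _)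
        linarith [hW p]
    have hupd : ∀ j ∈ J, Function.update S j₀ S₀ j = S j := fun j hj =>
      Function.update_of_ne (by rintro rfl; exact hj₀ hj) _ _
    refine ⟨Function.update S j₀ S₀, fun j hj => ?_, ?_⟩
    · rcases mem_insert.1 hj with rfl | hj
      · simpa using ⟨hS₀W, hS₀card, hS₀⟩
      · obtain ⟨hSW, hScard, hSsw⟩ := hS j hj
        rw [hupd j hj]
        exact ⟨hSW.mono_right subset_union_left, hScard, hSsw⟩
    · rw [coe_insert, Set.pairwiseDisjoint_insert_of_notMem (mod_cast hj₀)]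
      refine ⟨hSJ.mono_on fun j hj => (hupd j hj).le, fun j hj => ?_⟩
      rw [Function.update_self, hupd j hj]
      exact ((hS j hj).1.mono_right subset_union_right).symm

theorem hasTransversalFactor_insert_biUnion_of_copies {ψ₁ ψ₂ : ι → V}
    (hc₁ : IsTransversalCopy E F P ψ₁) (hc₂ : IsTransversalCopy E F P ψ₂)
    (hd : Disjoint (univ.image ψ₁) (univ.image ψ₂)) (i : ι) {S : ι → Finset V}
    (hSψ₁ : ∀ j ≠ i, Disjoint (S j) (univ.image ψ₁))
    (hSψ₂ : ∀ j ≠ i, Disjoint (S j) (univ.image ψ₂))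
    (hSd : ((univ.erase i : Finset ι) : Set ι).PairwiseDisjoint S)
    (hS : ∀ j ≠ i, HasTransversalFactor E F P (insert (ψ₂ j) (S j))) :
    HasTransversalFactor E F P
      (insert (ψ₁ i) ((univ.erase i).biUnion fun j => {ψ₁ j, ψ₂ j} ∪ S j)) := by
  have heq : insert (ψ₁ i) ((univ.erase i).biUnion fun j => {ψ₁ j, ψ₂ j} ∪ S j) =
      univ.image ψ₁ ∪ (univ.erase i).biUnion fun j => insert (ψ₂ j) (S j) := by
    ext x
    simp only [mem_insert, mem_union, mem_biUnion, mem_erase, mem_univ, and_true, mem_image,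
      true_and, mem_singleton]
    constructor
    · rintro (rfl | ⟨j, hj, (rfl | rfl) | hx⟩)
      exacts [Or.inl ⟨i, rfl⟩, Or.inl ⟨j, rfl⟩, Or.inr ⟨j, hj, Or.inl rfl⟩,
        Or.inr ⟨j, hj, Or.inr hx⟩]
    · rintro (⟨j, rfl⟩ | ⟨j, hj, rfl | hx⟩)
      · by_cases hj : j = i
        exacts [Or.inl (hj ▸ rfl), Or.inr ⟨j, hj, Or.inl (Or.inl rfl)⟩]
      exacts [Or.inr ⟨j, hj, Or.inl (Or.inr rfl)⟩, Or.inr ⟨j, hj, Or.inr hx⟩]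
  have hψ₂ : ∀ j l, ψ₂ j ∉ S l ∨ l = i := fun j l => by
    by_cases hl : l = i
    · exact Or.inr hl
    · exact Or.inl fun h => disjoint_left.1 (hSψ₂ l hl) h (mem_image_of_mem _ (mem_univ j))
  rw [heq]
  refine hc₁.hasTransversalFactor.union
    (hasTransversalFactor_biUnion _ (fun j hj => hS j (ne_of_mem_erase hj)) ?_) ?_
  · intro j hj l hl hjl
    simp only [mem_coe, mem_erase] at hj hl
    simp only [Function.onFun, disjoint_insert_left, disjoint_insert_right, mem_insert,
      not_or]
    exact ⟨⟨hc₂.1.ne hjl.symm, (hψ₂ l j).resolve_right hj.1⟩, (hψ₂ j l).resolve_right hl.1,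
      hSd (by simpa using hj.1) (by simpa using hl.1) hjl⟩
  · refine (disjoint_biUnion_right _ _ _).2 fun j hj => disjoint_insert_right.2 ⟨?_, ?_⟩
    · exact disjoint_right.1 hd (mem_image_of_mem _ (mem_univ j))
    · exact (hSψ₁ j (ne_of_mem_erase hj)).symm

theorem notMem_biUnion_of_copies {ψ₁ ψ₂ : ι → V} (hc₁ : IsTransversalCopy E F P ψ₁)
    (hd : Disjoint (univ.image ψ₁) (univ.image ψ₂)) (i : ι) {S : ι → Finset V}
    (hSψ₁ : ∀ j ≠ i, Disjoint (S j) (univ.image ψ₁)) :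
    ψ₁ i ∉ (univ.erase i).biUnion fun j => {ψ₁ j, ψ₂ j} ∪ S j := by
  intro h
  obtain ⟨j, hj, hx⟩ := mem_biUnion.1 h
  have hji := ne_of_mem_erase hj
  simp only [mem_union, mem_insert, mem_singleton] at hx
  rcases hx with (hx | hx) | hx
  · exact hji (hc₁.1 hx).symm
  · exact disjoint_left.1 hd (mem_image_of_mem _ (mem_univ i))
      (hx ▸ mem_image_of_mem _ (mem_univ j))
  · exact disjoint_left.1 (hSψ₁ j hji) hx (mem_image_of_mem _ (mem_univ i))

theorem isSwitcher_biUnion_of_copies {ψ₁ ψ₂ : ι → V}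
    (hc₁ : IsTransversalCopy E F P ψ₁) (hc₂ : IsTransversalCopy E F P ψ₂)
    (hd : Disjoint (univ.image ψ₁) (univ.image ψ₂)) (i : ι) {S : ι → Finset V}
    (hSψ₁ : ∀ j ≠ i, Disjoint (S j) (univ.image ψ₁))
    (hSψ₂ : ∀ j ≠ i, Disjoint (S j) (univ.image ψ₂))
    (hSd : ((univ.erase i : Finset ι) : Set ι).PairwiseDisjoint S)
    (hS : ∀ j ≠ i, IsSwitcher E F P (S j) (ψ₁ j) (ψ₂ j)) :
    IsSwitcher E F P ((univ.erase i).biUnion fun j => {ψ₁ j, ψ₂ j} ∪ S j) (ψ₁ i) (ψ₂ i) := by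
  have hswap : ((univ.erase i).biUnion fun j => {ψ₂ j, ψ₁ j} ∪ S j) =
      (univ.erase i).biUnion fun j => {ψ₁ j, ψ₂ j} ∪ S j := by
    simp only [pair_comm]
  exact ⟨notMem_biUnion_of_copies hc₁ hd i hSψ₁,
    hswap ▸ notMem_biUnion_of_copies hc₂ hd.symm i hSψ₂,
    hasTransversalFactor_insert_biUnion_of_copies hc₁ hc₂ hd i hSψ₁ hSψ₂ hSd
      fun j hj => (hS j hj).2.2.2,
    hswap ▸ hasTransversalFactor_insert_biUnion_of_copies hc₂ hc₁ hd.symm i hSψ₂ hSψ₁ hSd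
      fun j hj => (hS j hj).2.2.1⟩

theorem exists_isSwitcher_of_copies (hP : Pairwise (Disjoint on P)) {m : ℝ} {k : ℕ}
    (hk : 1 ≤ k * Fintype.card ι) {ψ₁ ψ₂ : ι → V} (hc₁ : IsTransversalCopy E F P ψ₁)
    (hc₂ : IsTransversalCopy E F P ψ₂) (hd : Disjoint (univ.image ψ₁) (univ.image ψ₂)) (i : ι)
    (hreach : ∀ j, j ≠ i → Reachable E F P m k (ψ₁ j) (ψ₂ j)) {W : Finset V}
    (hW₁ : ∀ j, ψ₁ j ∉ W) (hW₂ : ∀ j, ψ₂ j ∉ W)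
    (hW : ∀ p, ((W ∩ P p).card : ℝ) + k * Fintype.card ι + 2 ≤ m) :
    ∃ S, Disjoint S W ∧ S.card + 1 ≤ (k * Fintype.card ι + 1) * Fintype.card ι ∧
      IsSwitcher E F P S (ψ₁ i) (ψ₂ i) := by
  have hc : 1 ≤ Fintype.card ι := Fintype.card_pos_iff.2 ⟨i⟩
  have hJ : (univ.erase i).card = Fintype.card ι - 1 := card_erase_of_mem (mem_univ i)
  obtain ⟨S, hS, hSd⟩ := exists_pairwiseDisjoint_isSwitchers hP hk (univ.erase i)
    (fun j hj => hreach j (ne_of_mem_erase hj)) (W := W ∪ (univ.image ψ₁ ∪ univ.image ψ₂))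
    fun p => by
      have h₁ := card_union_inter_le W (univ.image ψ₁ ∪ univ.image ψ₂) (P p)
      have h₂ := card_union_inter_le (univ.image ψ₁) (univ.image ψ₂) (P p)
      have h₃ := hc₁.card_image_inter_le_one hP p
      have h₄ := hc₂.card_image_inter_le_one hP p
      have : (((W ∪ (univ.image ψ₁ ∪ univ.image ψ₂)) ∩ P p).card : ℝ) ≤ (W ∩ P p).card + 2 := by
        exact_mod_cast h₁.trans (by omega)
      have : (k : ℝ) * (univ.erase i).card ≤ k * Fintype.card ι := by
        gcongr
        exact card_le_univ _
      linarith [hW p]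
  have hSW : ∀ j ≠ i, Disjoint (S j) W ∧ Disjoint (S j) (univ.image ψ₁) ∧
      Disjoint (S j) (univ.image ψ₂) := fun j hj => by
    simpa using (hS j (mem_erase.2 ⟨hj, mem_univ j⟩)).1
  refine ⟨_, ?_, ?_, isSwitcher_biUnion_of_copies hc₁ hc₂ hd i (fun j hj => (hSW j hj).2.1)
    (fun j hj => (hSW j hj).2.2) hSd fun j hj => (hS j (mem_erase.2 ⟨hj, mem_univ j⟩)).2.2⟩
  · refine (disjoint_biUnion_left _ _ _).2 fun j hj => disjoint_union_left.2 ⟨?_, ?_⟩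
    · simp [hW₁, hW₂]
    · exact (hSW j (ne_of_mem_erase hj)).1
  · have hcard : ∀ j ∈ univ.erase i, ({ψ₁ j, ψ₂ j} ∪ S j).card ≤ k * Fintype.card ι + 1 :=
      fun j hj => by
        have := card_union_le {ψ₁ j, ψ₂ j} (S j)
        have := card_le_two (a := ψ₁ j) (b := ψ₂ j)
        have := (hS j hj).2.1
        omega
    have hsum := (card_biUnion_le.trans (sum_le_sum hcard)).trans_eq
      (by rw [sum_const, hJ, smul_eq_mul])
    rw [Nat.sub_one_mul, mul_comm] at hsum
    have := Nat.le_mul_of_pos_right (k * Fintype.card ι + 1) hc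
    omega

def HasLinkedCopies (E : Finset (Finset V)) (F : Finset (Finset ι)) (P : ι → Finset V)
    (m : ℝ) (k : ℕ) (i : ι) (U : Finset V) (v : V) (W : Finset V) : Prop :=
  ∃ ψ₁ ψ₂ : ι → V,
    IsTransversalCopy E F P ψ₁ ∧ IsTransversalCopy E F P ψ₂ ∧
    (∀ j, ψ₁ j ∉ W) ∧ (∀ j, ψ₂ j ∉ W) ∧
    Disjoint (univ.image ψ₁) (univ.image ψ₂) ∧
    ψ₁ i ∈ U ∧ ψ₂ i = v ∧
    ∀ j : ι, j ≠ i → Reachable E F P m k (ψ₁ j) (ψ₂ j)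

theorem reachable_of_isClosed_of_hasLinkedCopies (hP : Pairwise (Disjoint on P))
    {m : ℝ} {k : ℕ} (hk : 1 ≤ k * Fintype.card ι) {i : ι} {U : Finset V}
    (hU : IsClosed E F P m k U) {u v : V} (hu : u ∈ U)
    (hv : ∀ W : Finset V, (∀ p, ((W ∩ P p).card : ℝ) ≤ m - k * Fintype.card ι) →
      HasLinkedCopies E F P m k i U v W) :
    Reachable E F P (m - k * Fintype.card ι - 3) (3 * k * Fintype.card ι) u v := by
  have hc : 1 ≤ Fintype.card ι := Fintype.card_pos_iff.2 ⟨i⟩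
  refine reachable_of_forall_exists_isSwitcher fun W _ _ hW => ?_
  have hWu : ∀ p, (((insert u W) ∩ P p).card : ℝ) ≤ (W ∩ P p).card + 1 := fun p => by
    exact_mod_cast card_insert_inter_le u W (P p)
  obtain ⟨ψ₁, ψ₂, hc₁, hc₂, hψ₁W, hψ₂W, hd, hψ₁U, rfl, hreach⟩ :=
    hv (insert u W) fun p => by linarith [hWu p, hW p]
  have hψ₁u : ∀ j, ψ₁ j ≠ u ∧ ψ₁ j ∉ W := by simpa [not_or] using hψ₁W
  have hψ₁ψ₂ : ψ₁ i ≠ ψ₂ i := fun h =>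
    disjoint_left.1 hd (mem_image_of_mem _ (mem_univ i)) (h ▸ mem_image_of_mem _ (mem_univ i))
  obtain ⟨S₂, hS₂W, hS₂card, hS₂⟩ := exists_isSwitcher_of_copies hP hk hc₁ hc₂ hd i hreach
    hψ₁W hψ₂W fun p => by linarith [hWu p, hW p]
  obtain ⟨S, hSW, hScard, hS⟩ := (hU u hu (ψ₁ i) hψ₁U (hψ₁u i).1.symm).exists_isSwitcher_trans hk
    hS₂ (hS₂W.mono_right (subset_insert _ _)) (disjoint_right.1 hS₂W (mem_insert_self u W))
    (hψ₁u i).2 (hψ₁u i).1.symm hψ₁ψ₂ fun p => by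
      have : ((S₂ ∩ P p).card : ℝ) ≤ k * Fintype.card ι + 1 := by
        exact_mod_cast hS₂.card_inter_le hP hS₂card p
      linarith [hW p]
  refine ⟨S, hSW, ?_, hS⟩
  calc S.card + 1 ≤ k * Fintype.card ι + (k * Fintype.card ι + 1) * Fintype.card ι := by omega
    _ ≤ 3 * (k * Fintype.card ι) * Fintype.card ι := by nlinarith
    _ = 3 * k * Fintype.card ι * Fintype.card ι := by ring

theorem reachable_of_reachable_through (hP : Pairwise (Disjoint on P))
    {m m' : ℝ} {K : ℕ} (hK : 1 ≤ K * Fintype.card ι) {i : ι} {U : Finset V} (hU : U ⊆ P i)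
    (hUcard : m' < U.card) {u v : V} (hu : ∀ w ∈ U, u ≠ w ∧ Reachable E F P m K u w)
    (hv : ∀ w ∈ U, w ≠ v ∧ Reachable E F P m K w v) (hm : m' + K + 1 ≤ m) :
    Reachable E F P m' (2 * K) u v := by
  refine reachable_of_forall_exists_isSwitcher fun W _ _ hW => ?_
  obtain ⟨w, hwU, hwW⟩ : ∃ w ∈ U, w ∉ W := by
    obtain ⟨w, hwU, hw⟩ := exists_mem_notMem_of_card_lt_card (s := W ∩ P i) (t := U)
      (by exact_mod_cast (hW i).trans_lt hUcard)
    exact ⟨w, hwU, fun hwW => hw (mem_inter.2 ⟨hwW, hU hwU⟩)⟩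
  obtain ⟨huw, hreach_uw⟩ := hu w hwU
  obtain ⟨hwv, hreach_wv⟩ := hv w hwU
  have hK0 : (0 : ℝ) ≤ K := K.cast_nonneg
  obtain ⟨S₂, hS₂W, hS₂card, hS₂⟩ := hreach_wv.exists_isSwitcher hK (W := insert u W) fun p => by
    have : (((insert u W) ∩ P p).card : ℝ) ≤ (W ∩ P p).card + 1 := by
      exact_mod_cast card_insert_inter_le u W (P p)
    linarith [hW p]
  obtain ⟨S, hSW, hScard, hS⟩ := hreach_uw.exists_isSwitcher_trans hK hS₂
    (hS₂W.mono_right (subset_insert _ _)) (disjoint_right.1 hS₂W (mem_insert_self u W)) hwW huw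
    hwv fun p => by
      have : ((S₂ ∩ P p).card : ℝ) ≤ K := by exact_mod_cast hS₂.card_inter_le hP hS₂card p
      linarith [hW p]
  refine ⟨S, hSW, ?_, hS⟩
  rw [mul_assoc]
  omega

end RD

theorem stmt_15_general (r t k m : ℕ) (hk : 1 ≤ k)
    (V : Type) [DecidableEq V] [Fintype V]
    (F : Finset (Finset (Fin t))) (E : Finset (Finset V))
    (P : Fin t → Finset V) (hadm : RD.AdmitsPartition E r F P)
    (i : Fin t) (U₁ U₂ : Finset V) (hU₁ : U₁ ⊆ P i)
    (hclosed : RD.IsClosed E F P (m : ℝ) k U₁)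
    (hsize : m + 10 * k * t ≤ U₁.card)
    (hdisj : Disjoint U₁ U₂)
    (hyp : ∀ W : Finset V,
      (∀ j : Fin t, ((W ∩ P j).card : ℝ) ≤ (m : ℝ) - (k : ℝ) * t) →
      ∀ v ∈ U₂, ∃ ψ₁ ψ₂ : Fin t → V,
        RD.IsTransversalCopy E F P ψ₁ ∧ RD.IsTransversalCopy E F P ψ₂ ∧
        (∀ j, ψ₁ j ∉ W) ∧ (∀ j, ψ₂ j ∉ W) ∧
        Disjoint (Finset.image ψ₁ Finset.univ) (Finset.image ψ₂ Finset.univ) ∧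
        ψ₁ i ∈ U₁ ∧ ψ₂ i = v ∧
        ∀ j : Fin t, j ≠ i → RD.Reachable E F P (m : ℝ) k (ψ₁ j) (ψ₂ j)) :
    RD.IsClosed E F P ((m : ℝ) - 10 * (k : ℝ) * t) (6 * k * t) (U₁ ∪ U₂) := by
  have ht : 1 ≤ t := i.pos
  have hkt : 1 ≤ k * t := Nat.mul_le_mul hk ht
  have hkt' : (1 : ℝ) ≤ k * t := by exact_mod_cast hkt
  have hcross : ∀ u ∈ U₁, ∀ v ∈ U₂,
      RD.Reachable E F P (m - k * t - 3) (3 * k * t) u v := fun u hu v hv => by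
    simpa using RD.reachable_of_isClosed_of_hasLinkedCopies hadm.1 (by simpa using hkt) hclosed hu
      fun W hW => hyp W (by simpa using hW) v hv
  have hne : ∀ u ∈ U₁, ∀ v ∈ U₂, u ≠ v := fun u hu v hv h => disjoint_left.1 hdisj hu (h ▸ hv)
  intro u hu v hv huv
  rcases mem_union.1 hu with hu | hu <;> rcases mem_union.1 hv with hv | hv
  · exact (hclosed u hu v hv huv).mono (by linarith) (by nlinarith)
  · exact (hcross u hu v hv).mono (by linarith) (by gcongr; norm_num)
  · exact (hcross v hv u hu).symm.mono (by linarith) (by gcongr; norm_num)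
  · refine (RD.reachable_of_reachable_through hadm.1
      (by simp only [Fintype.card_fin]; nlinarith) hU₁ ?_
      (fun w hw => ⟨(hne w hw u hu).symm, (hcross w hw u hu).symm⟩)
      (fun w hw => ⟨hne w hw v hv, hcross w hw v hv⟩) ?_).mono le_rfl (le_of_eq (by ring))
    · have : ((m + 10 * k * t : ℕ) : ℝ) ≤ U₁.card := by exact_mod_cast hsize
      push_cast at this
      linarith
    · push_cast
      linarith

/-- merging closed sets
(Lemma 2.20 / `lem:merge_closed_and_nonclosed_sets`). -/
theorem stmt_15 (r t k m : ℕ) (hr : 2 ≤ r) (ht : 1 ≤ t) (hk : 1 ≤ k)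
    (hm : 10 * k * t < m)
    (V : Type) [DecidableEq V] [Fintype V]
    (F : Finset (Finset (Fin t))) (E : Finset (Finset V))
    (P : Fin t → Finset V) (hadm : RD.AdmitsPartition E r F P)
    (i : Fin t) (U₁ U₂ : Finset V) (hU₁ : U₁ ⊆ P i) (hU₂ : U₂ ⊆ P i)
    (hclosed : RD.IsClosed E F P (m : ℝ) k U₁)
    (hsize : m + 10 * k * t ≤ U₁.card)
    (hdisj : Disjoint U₁ U₂)
    (hyp : ∀ W : Finset V,
      (∀ j : Fin t, ((W ∩ P j).card : ℝ) ≤ (m : ℝ) - (k : ℝ) * t) →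
      ∀ v ∈ U₂, ∃ ψ₁ ψ₂ : Fin t → V,
        RD.IsTransversalCopy E F P ψ₁ ∧ RD.IsTransversalCopy E F P ψ₂ ∧
        (∀ j, ψ₁ j ∉ W) ∧ (∀ j, ψ₂ j ∉ W) ∧
        Disjoint (Finset.image ψ₁ Finset.univ) (Finset.image ψ₂ Finset.univ) ∧
        ψ₁ i ∈ U₁ ∧ ψ₂ i = v ∧
        ∀ j : Fin t, j ≠ i → RD.Reachable E F P (m : ℝ) k (ψ₁ j) (ψ₂ j)) :
    RD.IsClosed E F P ((m : ℝ) - 10 * (k : ℝ) * t) (6 * k * t) (U₁ ∪ U₂) :=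
  stmt_15_general r t k m hk V F E P hadm i U₁ U₂ hU₁ hclosed hsize hdisj hyp
end
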